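/- arXiv:1312.3661 — 6 statements merged into one kernel-verified Lean document; each statement's English description precedes it below -/
import Mathlib

section
/- For every λ₁ > 0, λ₂ ≥ 0 and every real ω, the series ∑_{k=0}^∞ [e^{−λ₂/2} (λ₂/2)^k / k!] · (1 − 2iω)^{−λ₁/2 − k} converges and equals exp( i λ₂ ω / (1 − 2iω) ) · (1 − 2iω)^{−λ₁/2}, where complex powers of 1 − 2iω are taken with the principal branch (note Re(1 − 2iω) = 1 > 0). -/
/-!
Writing `z = 1 - 2iω` and `μ = λ₂/2`, the `k`-th term is `z^(-λ₁/2)` times the Poisson weight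
`e^{-μ} μ^k / k!` times `(z⁻¹)^k`. The Poisson generating function `∑ e^{-μ} μ^k/k! · w^k = e^{μ(w-1)}`
at `w = z⁻¹` gives the sum, and `μ (z⁻¹ - 1) = μ (1 - z) / z = iλ₂ω / z`.
-/

open Complex

theorem Complex.hasSum_poisson_mul_pow (μ w : ℂ) :
    HasSum (fun k : ℕ => exp (-μ) * μ ^ k / k.factorial * w ^ k) (exp (μ * (w - 1))) := by
  have hexp : HasSum (fun k : ℕ => (μ * w) ^ k / k.factorial) (exp (μ * w)) := by
    rw [exp_eq_exp_ℂ]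
    exact NormedSpace.expSeries_div_hasSum_exp _
  have hvalue : exp (μ * (w - 1)) = exp (-μ) * exp (μ * w) := by
    rw [← exp_add]
    ring_nf
  rw [hvalue]
  exact (hexp.mul_left (exp (-μ))).congr_fun fun k => by ring

theorem Complex.cpow_sub_natCast_eq_mul_inv_pow {z : ℂ} (hz : z ≠ 0) (a : ℂ) (k : ℕ) :
    z ^ (a - k) = z ^ a * z⁻¹ ^ k := by
  rw [cpow_sub _ _ hz, cpow_natCast, inv_pow, div_eq_mul_inv]

theorem Complex.one_sub_two_mul_I_mul_ofReal_ne_zero (ω : ℝ) : 1 - 2 * I * (ω : ℂ) ≠ 0 := by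
  intro h
  simpa using congrArg re h

theorem sncChiSq_char_series_general (lam1 lam2 ω : ℝ) :
    HasSum
      (fun k : ℕ =>
        ((Real.exp (-lam2 / 2) * (lam2 / 2) ^ k / (Nat.factorial k) : ℝ) : ℂ) *
          (1 - 2 * Complex.I * (ω : ℂ)) ^ (-(lam1 : ℂ) / 2 - (k : ℂ)))
      (Complex.exp (Complex.I * (lam2 : ℂ) * (ω : ℂ) / (1 - 2 * Complex.I * (ω : ℂ))) *
        (1 - 2 * Complex.I * (ω : ℂ)) ^ (-(lam1 : ℂ) / 2)) := by
  set z : ℂ := 1 - 2 * I * (ω : ℂ)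
  have hz : z ≠ 0 := one_sub_two_mul_I_mul_ofReal_ne_zero ω
  have hsum := (hasSum_poisson_mul_pow ((lam2 : ℂ) / 2) z⁻¹).mul_right (z ^ (-(lam1 : ℂ) / 2))
  have hexponent : (lam2 : ℂ) / 2 * (z⁻¹ - 1) = I * lam2 * ω / z := by
    field_simp
    ring
  rw [hexponent] at hsum
  refine hsum.congr_fun fun k => ?_
  rw [cpow_sub_natCast_eq_mul_inv_pow hz]
  push_cast [ofReal_exp]
  ring_nf

/-- For every `λ₁ > 0`, `λ₂ ≥ 0` and real `ω`, the series
`∑_{k=0}^∞ [e^{−λ₂/2} (λ₂/2)^k / k!] · (1 − 2iω)^{−λ₁/2 − k}` converges and equals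
`exp(i λ₂ ω / (1 − 2iω)) · (1 − 2iω)^{−λ₁/2}` (principal-branch complex powers). -/
theorem sncChiSq_char_series (lam1 lam2 ω : ℝ) (hlam1 : 0 < lam1) (hlam2 : 0 ≤ lam2) :
    HasSum
      (fun k : ℕ =>
        ((Real.exp (-lam2 / 2) * (lam2 / 2) ^ k / (Nat.factorial k) : ℝ) : ℂ) *
          (1 - 2 * Complex.I * (ω : ℂ)) ^ (-(lam1 : ℂ) / 2 - (k : ℂ)))
      (Complex.exp (Complex.I * (lam2 : ℂ) * (ω : ℂ) / (1 - 2 * Complex.I * (ω : ℂ))) *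
        (1 - 2 * Complex.I * (ω : ℂ)) ^ (-(lam1 : ℂ) / 2)) :=
  sncChiSq_char_series_general lam1 lam2 ω
end

section
/- Let t > 0, r₀ > 0, let b, σ : [0,t] → ℝ be continuous with σ > 0, let d : [0,t] → (0,∞) be continuously differentiable, and set θ(s) = d(s)σ²(s)/4 and Σ(s,t) = (1/4) ∫_s^t exp(−∫_v^t b(u) du) σ²(v) dv. Then for every real ω, exp( iω [ r₀ e^{−∫_0^t b(u)du} / (1 − 2iω Σ(0,t)) + ∫_0^t e^{−∫_s^t b(u)du} θ(s) / (1 − 2iω Σ(s,t)) ds ] ) = exp( iω r₀ e^{−∫_0^t b(u)du} / (1 − 2iω Σ(0,t)) − (1/2) ∫_0^t d′(s) Log(1 − 2iω Σ(s,t)) ds ) / (1 − 2iω Σ(0,t))^{d(0)/2}, where Log is the principal complex logarithm and the complex power is the principal branch. -/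
open intervalIntegral

/-- The variance kernel `Σ(s,t) = (1/4) ∫_s^t exp(−∫_v^t b(u) du) σ²(v) dv`. -/
noncomputable def cirSigma (b σ : ℝ → ℝ) (s t : ℝ) : ℝ :=
  (1 / 4) * ∫ v in s..t, Real.exp (-∫ u in v..t, b u) * (σ v) ^ 2

/-!
Write `F(s) = 1 - 2iω Σ(s,t)`. Since `∂ₛΣ(s,t) = -¼ e^{-∫_s^t b} σ²(s)`, the integrand
`iω e^{-∫_s^t b} θ(s) / F(s)` equals `(d(s)/2) (Log F)'(s)`, and `Log F` is differentiable because
`Re F = 1`. Integrating by parts, with `F(t) = 1`, turns `iω ∫_0^t e^{-∫_s^t b} θ / F` into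
`-(d(0)/2) Log F(0) - ½ ∫_0^t d' Log F`, and `exp(-(d(0)/2) Log F(0)) = F(0)^{-d(0)/2}`.
-/

open Set Complex

section IntegralLeft

variable {E : Type*} [NormedAddCommGroup E] [NormedSpace ℝ E] {f : ℝ → E} {a b : ℝ}

theorem continuousOn_integral_left (hf : ContinuousOn f (Icc a b)) :
    ContinuousOn (fun s => ∫ x in s..b, f x) (Icc a b) := by
  rcases le_or_gt a b with hab | hba
  · rw [← uIcc_of_le hab] at hf ⊢
    exact continuousOn_primitive_interval_left hf.integrableOn_Icc
  · simp [Icc_eq_empty_of_lt hba]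

theorem hasDerivAt_integral_left_of_mem_Ioo [CompleteSpace E] (hf : ContinuousOn f (Icc a b))
    {s : ℝ} (hs : s ∈ Ioo a b) : HasDerivAt (fun u => ∫ x in u..b, f x) (-f s) s :=
  integral_hasDerivAt_left
    ((hf.mono (Icc_subset_Icc hs.1.le le_rfl)).intervalIntegrable_of_Icc hs.2.le)
    ((hf.mono Ioo_subset_Icc_self).stronglyMeasurableAtFilter isOpen_Ioo s hs)
    (hf.continuousAt (Icc_mem_nhds hs.1 hs.2))

end IntegralLeft

noncomputable def cirSigmaDensity (b σ : ℝ → ℝ) (t v : ℝ) : ℝ :=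
  Real.exp (-∫ u in v..t, b u) * (σ v) ^ 2

theorem one_sub_two_I_mul_mem_slitPlane (ω x : ℝ) :
    1 - 2 * I * (ω : ℂ) * (x : ℂ) ∈ slitPlane :=
  mem_slitPlane_iff.2 (Or.inl (by simp))

section CirSigma

variable {b σ : ℝ → ℝ} {a t : ℝ}

theorem continuousOn_cirSigmaDensity (hb : ContinuousOn b (Icc a t))
    (hσ : ContinuousOn σ (Icc a t)) : ContinuousOn (cirSigmaDensity b σ t) (Icc a t) :=
  (Real.continuous_exp.comp_continuousOn (continuousOn_integral_left hb).neg).mul (hσ.pow 2)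

theorem continuousOn_cirSigma (hb : ContinuousOn b (Icc a t)) (hσ : ContinuousOn σ (Icc a t)) :
    ContinuousOn (fun s => cirSigma b σ s t) (Icc a t) :=
  continuousOn_const.mul (continuousOn_integral_left (continuousOn_cirSigmaDensity hb hσ))

theorem hasDerivAt_cirSigma (hb : ContinuousOn b (Icc a t)) (hσ : ContinuousOn σ (Icc a t))
    {s : ℝ} (hs : s ∈ Ioo a t) :
    HasDerivAt (fun s => cirSigma b σ s t) (-(1 / 4) * cirSigmaDensity b σ t s) s :=
  ((hasDerivAt_integral_left_of_mem_Ioo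
    (continuousOn_cirSigmaDensity hb hσ) hs).const_mul (1 / 4 : ℝ)).congr_deriv (by ring)

theorem continuousOn_log_one_sub_cirSigma (hb : ContinuousOn b (Icc a t))
    (hσ : ContinuousOn σ (Icc a t)) (ω : ℝ) :
    ContinuousOn (fun s => log (1 - 2 * I * (ω : ℂ) * (cirSigma b σ s t : ℂ))) (Icc a t) :=
  ContinuousOn.clog
    (continuousOn_const.sub (continuousOn_const.mul
      (continuous_ofReal.comp_continuousOn (continuousOn_cirSigma hb hσ))))
    fun _ _ => one_sub_two_I_mul_mem_slitPlane ω _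

theorem hasDerivAt_log_one_sub_cirSigma (hb : ContinuousOn b (Icc a t))
    (hσ : ContinuousOn σ (Icc a t)) (ω : ℝ) {s : ℝ} (hs : s ∈ Ioo a t) :
    HasDerivAt (fun s => log (1 - 2 * I * (ω : ℂ) * (cirSigma b σ s t : ℂ)))
      (I * ω * cirSigmaDensity b σ t s / 2 / (1 - 2 * I * (ω : ℂ) * (cirSigma b σ s t : ℂ))) s := by
  have hF := ((hasDerivAt_cirSigma hb hσ hs).ofReal_comp.const_mul
    (2 * I * (ω : ℂ))).const_sub 1
  convert hF.clog_real (one_sub_two_I_mul_mem_slitPlane ω _) using 1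
  push_cast
  ring

theorem I_mul_integral_div_one_sub_cirSigma (hat : a ≤ t) (hb : ContinuousOn b (Icc a t))
    (hσ : ContinuousOn σ (Icc a t)) {d d' : ℝ → ℝ}
    (hd : ∀ s ∈ Icc a t, HasDerivWithinAt d (d' s) (Icc a t) s)
    (hd' : ContinuousOn d' (Icc a t)) (ω : ℝ) :
    I * ω * ∫ s in a..t, ((Real.exp (-∫ u in s..t, b u) * (d s * σ s ^ 2 / 4) : ℝ) : ℂ) /
        (1 - 2 * I * (ω : ℂ) * (cirSigma b σ s t : ℂ)) =
      -((d a : ℂ) / 2 * log (1 - 2 * I * (ω : ℂ) * (cirSigma b σ a t : ℂ))) -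
        (1 / 2 : ℂ) * ∫ s in a..t,
          (d' s : ℂ) * log (1 - 2 * I * (ω : ℂ) * (cirSigma b σ s t : ℂ)) := by
  set F : ℝ → ℂ := fun s => 1 - 2 * I * (ω : ℂ) * (cirSigma b σ s t : ℂ)
  have hF_ne : ∀ s, F s ≠ 0 := fun s => slitPlane_ne_zero (one_sub_two_I_mul_mem_slitPlane ω _)
  have hdC : ContinuousOn (fun s => (d s : ℂ)) (Icc a t) :=
    continuous_ofReal.comp_continuousOn fun s hs => (hd s hs).continuousWithinAt
  have hF_cont : ContinuousOn F (Icc a t) := continuousOn_const.sub (continuousOn_const.mul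
    (continuous_ofReal.comp_continuousOn (continuousOn_cirSigma hb hσ)))
  have hdensity : ContinuousOn (fun s => (cirSigmaDensity b σ t s : ℂ)) (Icc a t) :=
    continuous_ofReal.comp_continuousOn (continuousOn_cirSigmaDensity hb hσ)
  rw [← uIcc_of_le hat] at hdC hF_cont hdensity
  have hparts := integral_mul_deriv_eq_deriv_mul_of_hasDerivAt (u' := fun s => (d' s : ℂ))
    (v' := fun s => I * ω * cirSigmaDensity b σ t s / 2 / F s) hdC
    ((continuousOn_log_one_sub_cirSigma hb hσ ω).mono (uIcc_of_le hat).subset)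
    (fun s hs => by
      rw [min_eq_left hat, max_eq_right hat] at hs
      exact ((hd s (Ioo_subset_Icc_self hs)).hasDerivAt (Icc_mem_nhds hs.1 hs.2)).ofReal_comp)
    (fun s hs => by
      rw [min_eq_left hat, max_eq_right hat] at hs
      exact hasDerivAt_log_one_sub_cirSigma hb hσ ω hs)
    ((continuous_ofReal.comp_continuousOn hd').intervalIntegrable_of_Icc hat)
    ((((continuousOn_const.mul hdensity).div_const 2).div hF_cont
      fun s _ => hF_ne s).intervalIntegrable)
  have hSigma_tt : cirSigma b σ t t = 0 := by simp [cirSigma]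
  calc I * ω * ∫ s in a..t, ((Real.exp (-∫ u in s..t, b u) * (d s * σ s ^ 2 / 4) : ℝ) : ℂ) / F s
      = (1 / 2 : ℂ) * ∫ s in a..t, (d s : ℂ) * (I * ω * cirSigmaDensity b σ t s / 2 / F s) := by
        rw [← integral_const_mul, ← integral_const_mul]
        congr 1 with s
        simp only [cirSigmaDensity]
        push_cast
        field_simp [hF_ne s]
        ring
    _ = _ := by
        rw [hparts, hSigma_tt, ofReal_zero, mul_zero, sub_zero, log_one]
        ring

end CirSigma

theorem cir_charFun_two_forms_general (t r₀ : ℝ) (ht : 0 < t) (b σ d d' : ℝ → ℝ)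
    (hb : ContinuousOn b (Set.Icc 0 t)) (hσ : ContinuousOn σ (Set.Icc 0 t))
    (hd : ∀ s ∈ Set.Icc 0 t, HasDerivWithinAt d (d' s) (Set.Icc 0 t) s)
    (hd' : ContinuousOn d' (Set.Icc 0 t))
    (θ : ℝ → ℝ) (hθ : ∀ s, θ s = d s * (σ s) ^ 2 / 4) (ω : ℝ) :
    Complex.exp (Complex.I * (ω : ℂ) *
        (((r₀ * Real.exp (-∫ u in (0 : ℝ)..t, b u) : ℝ) : ℂ) /
            (1 - 2 * Complex.I * (ω : ℂ) * (cirSigma b σ 0 t : ℂ)) +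
          ∫ s in (0 : ℝ)..t,
            ((Real.exp (-∫ u in s..t, b u) * θ s : ℝ) : ℂ) /
              (1 - 2 * Complex.I * (ω : ℂ) * (cirSigma b σ s t : ℂ)))) =
      Complex.exp (Complex.I * (ω : ℂ) *
            (((r₀ * Real.exp (-∫ u in (0 : ℝ)..t, b u) : ℝ) : ℂ) /
              (1 - 2 * Complex.I * (ω : ℂ) * (cirSigma b σ 0 t : ℂ))) -
          (1 / 2 : ℂ) *
            ∫ s in (0 : ℝ)..t,
              (d' s : ℂ) *
                Complex.log (1 - 2 * Complex.I * (ω : ℂ) * (cirSigma b σ s t : ℂ))) /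
        (1 - 2 * Complex.I * (ω : ℂ) * (cirSigma b σ 0 t : ℂ)) ^ ((d 0 : ℂ) / 2) := by
  simp only [hθ]
  rw [mul_add, I_mul_integral_div_one_sub_cirSigma ht.le hb hσ hd hd' ω,
    cpow_def_of_ne_zero (slitPlane_ne_zero (one_sub_two_I_mul_mem_slitPlane ω _)), ← exp_sub]
  congr 1
  ring

/-- Equality of the two forms of the characteristic function of the extended CIR rate:
the form of Theorem 2 (after integration by parts) and the form of Lemma 2.8,
with `θ(s) = d(s)σ²(s)/4` (principal-branch logarithm and power). -/
theorem cir_charFun_two_forms (t r₀ : ℝ) (ht : 0 < t) (hr₀ : 0 < r₀) (b σ d d' : ℝ → ℝ)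
    (hb : ContinuousOn b (Set.Icc 0 t)) (hσ : ContinuousOn σ (Set.Icc 0 t))
    (hσpos : ∀ s ∈ Set.Icc 0 t, 0 < σ s)
    (hdpos : ∀ s ∈ Set.Icc 0 t, 0 < d s)
    (hd : ∀ s ∈ Set.Icc 0 t, HasDerivWithinAt d (d' s) (Set.Icc 0 t) s)
    (hd' : ContinuousOn d' (Set.Icc 0 t))
    (θ : ℝ → ℝ) (hθ : ∀ s, θ s = d s * (σ s) ^ 2 / 4) (ω : ℝ) :
    Complex.exp (Complex.I * (ω : ℂ) *
        (((r₀ * Real.exp (-∫ u in (0 : ℝ)..t, b u) : ℝ) : ℂ) /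
            (1 - 2 * Complex.I * (ω : ℂ) * (cirSigma b σ 0 t : ℂ)) +
          ∫ s in (0 : ℝ)..t,
            ((Real.exp (-∫ u in s..t, b u) * θ s : ℝ) : ℂ) /
              (1 - 2 * Complex.I * (ω : ℂ) * (cirSigma b σ s t : ℂ)))) =
      Complex.exp (Complex.I * (ω : ℂ) *
            (((r₀ * Real.exp (-∫ u in (0 : ℝ)..t, b u) : ℝ) : ℂ) /
              (1 - 2 * Complex.I * (ω : ℂ) * (cirSigma b σ 0 t : ℂ))) -
          (1 / 2 : ℂ) *
            ∫ s in (0 : ℝ)..t,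
              (d' s : ℂ) *
                Complex.log (1 - 2 * Complex.I * (ω : ℂ) * (cirSigma b σ s t : ℂ))) /
        (1 - 2 * Complex.I * (ω : ℂ) * (cirSigma b σ 0 t : ℂ)) ^ ((d 0 : ℂ) / 2) :=
  cir_charFun_two_forms_general t r₀ ht b σ d d' hb hσ hd hd' θ hθ ω
end

section
/- Suppose b, σ, θ are constant on [0,t] with b ≥ 0, σ > 0, θ > 0, set d = 4θ/σ² and Σ = (1/4)∫_0^t e^{−b(t−v)} σ² dv (so Σ = σ²(1 − e^{−bt})/(4b) when b > 0 and Σ = σ²t/4 when b = 0). Then for every r₀ > 0 and every real ω, exp( iω [ r₀ e^{−bt}/(1 − 2iωΣ) + ∫_0^t e^{−b(t−s)} θ / (1 − 2iω (1/4)∫_s^t e^{−b(t−v)}σ² dv) ds ] ) = exp( iω r₀ e^{−bt}/(1 − 2iωΣ) ) · (1 − 2iωΣ)^{−d/2}, i.e. the characteristic function formula of Theorem 2 reduces to the characteristic function of the scaled non-central chi-squared distribution χ²(d, r₀ e^{−bt}/Σ, √Σ) with d degrees of freedom (complex powers taken with the principal branch). -/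
/-!
Writing `Σ(s) = (1/4)∫_s^t e^{-b(t-v)}σ² dv`, the denominator `F(s) = 1 - 2iωΣ(s)` satisfies
`F'(s) = (iωσ²/2) e^{-b(t-s)}`, so `iω` times the integrand is `(2θ/σ²) F'/F = (d/2) F'/F`.
Since `Re F = 1`, `log ∘ F` is a primitive of `F'/F`; with `F(t) = 1` and `F(0) = 1 - 2iωΣ` the
integral term contributes `exp (-(d/2) log (1 - 2iωΣ)) = (1 - 2iωΣ)^{-d/2}`.
-/

open intervalIntegral Complex Set

theorem intervalIntegral.integral_div_eq_log_sub_log {F F' : ℝ → ℂ} {a b : ℝ}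
    (hF : ∀ x ∈ uIcc a b, HasDerivAt F (F' x) x) (hF' : ContinuousOn F' (uIcc a b))
    (hslit : ∀ x ∈ uIcc a b, F x ∈ slitPlane) :
    ∫ x in a..b, F' x / F x = log (F b) - log (F a) := by
  have hFc : ContinuousOn F (uIcc a b) := fun x hx => (hF x hx).continuousAt.continuousWithinAt
  refine integral_eq_sub_of_hasDerivAt (fun x hx => (hF x hx).clog_real (hslit x hx)) ?_
  exact (hF'.div hFc fun x hx => slitPlane_ne_zero (hslit x hx)).intervalIntegrable

theorem one_sub_two_I_mul_ofReal_mem_slitPlane (ω x : ℝ) :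
    1 - 2 * I * ω * (x : ℂ) ∈ slitPlane :=
  Or.inl (by simp)

theorem Continuous.integral_hasDerivAt_left {f : ℝ → ℝ} (hf : Continuous f) (s t : ℝ) :
    HasDerivAt (fun u => ∫ v in u..t, f v) (-f s) s :=
  intervalIntegral.integral_hasDerivAt_left (hf.intervalIntegrable s t)
    hf.stronglyMeasurable.stronglyMeasurableAtFilter hf.continuousAt

theorem I_mul_integral_div_one_sub_tail_integral {g : ℝ → ℝ} (hg : Continuous g) {σ : ℝ}
    (hσ : σ ≠ 0) (a t θ ω : ℝ) :
    I * ω * ∫ s in a..t, ((g s * θ : ℝ) : ℂ) /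
        (1 - 2 * I * ω * (((1 / 4) * ∫ v in s..t, g v * σ ^ 2 : ℝ) : ℂ)) =
      -(2 * θ / σ ^ 2 : ℝ) *
        log (1 - 2 * I * ω * (((1 / 4) * ∫ v in a..t, g v * σ ^ 2 : ℝ) : ℂ)) := by
  set F : ℝ → ℂ := fun s => 1 - 2 * I * ω * (((1 / 4) * ∫ v in s..t, g v * σ ^ 2 : ℝ) : ℂ)
  have hF : ∀ s, HasDerivAt F (I * ω * σ ^ 2 / 2 * g s) s := by
    intro s
    have hgσ : Continuous fun v => g v * σ ^ 2 := by fun_prop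
    have hTail := (hgσ.integral_hasDerivAt_left s t).const_mul (1 / 4 : ℝ)
    exact ((hTail.ofReal_comp.const_mul (2 * I * ω)).const_sub 1).congr_deriv
      (by push_cast; ring)
  have hlog := integral_div_eq_log_sub_log (a := a) (b := t) (fun s _ => hF s)
    (by fun_prop) (fun s _ => one_sub_two_I_mul_ofReal_mem_slitPlane _ _)
  have hFt : F t = 1 := by simp [F]
  rw [hFt, log_one, zero_sub] at hlog
  calc I * ω * ∫ s in a..t, ((g s * θ : ℝ) : ℂ) / F s
      = ∫ s in a..t, ((2 * θ / σ ^ 2 : ℝ) : ℂ) * (I * ω * σ ^ 2 / 2 * g s / F s) := by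
        rw [← integral_const_mul]
        congr 1 with s
        have hσ' : (σ : ℂ) ≠ 0 := by exact_mod_cast hσ
        push_cast
        field_simp
    _ = -(2 * θ / σ ^ 2 : ℝ) * log (F a) := by
        rw [integral_const_mul, hlog, mul_neg, neg_mul]

theorem cir_charFun_const_params_general (t r₀ b σ θ d S : ℝ)
    (hσ : 0 < σ)
    (hd : d = 4 * θ / σ ^ 2)
    (hS : S = (1 / 4) * ∫ v in (0 : ℝ)..t, Real.exp (-b * (t - v)) * σ ^ 2) (ω : ℝ) :
    Complex.exp (Complex.I * (ω : ℂ) *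
        (((r₀ * Real.exp (-b * t) : ℝ) : ℂ) / (1 - 2 * Complex.I * (ω : ℂ) * (S : ℂ)) +
          ∫ s in (0 : ℝ)..t,
            ((Real.exp (-b * (t - s)) * θ : ℝ) : ℂ) /
              (1 - 2 * Complex.I * (ω : ℂ) *
                (((1 / 4) * ∫ v in s..t, Real.exp (-b * (t - v)) * σ ^ 2 : ℝ) : ℂ)))) =
      Complex.exp (Complex.I * (ω : ℂ) *
          (((r₀ * Real.exp (-b * t) : ℝ) : ℂ) / (1 - 2 * Complex.I * (ω : ℂ) * (S : ℂ)))) *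
        (1 - 2 * Complex.I * (ω : ℂ) * (S : ℂ)) ^ (-(d : ℂ) / 2) := by
  have hint := I_mul_integral_div_one_sub_tail_integral (g := fun v => Real.exp (-b * (t - v)))
    (by fun_prop) hσ.ne' 0 t θ ω
  rw [← hS] at hint
  have hz : 1 - 2 * I * ω * (S : ℂ) ≠ 0 :=
    slitPlane_ne_zero (one_sub_two_I_mul_ofReal_mem_slitPlane ω S)
  rw [mul_add, exp_add, hint, cpow_def_of_ne_zero hz, hd]
  push_cast
  ring_nf

/-- With constant parameters `b ≥ 0`, `σ > 0`, `θ > 0`, the characteristic-function formula of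
Theorem 2 reduces to the characteristic function of the scaled non-central chi-squared
distribution `χ²(d, r₀e^{−bt}/Σ, √Σ)` with `d = 4θ/σ²` degrees of freedom
(principal-branch complex power). -/
theorem cir_charFun_const_params (t r₀ b σ θ d S : ℝ)
    (ht : 0 < t) (hr₀ : 0 < r₀) (hb : 0 ≤ b) (hσ : 0 < σ) (hθ : 0 < θ)
    (hd : d = 4 * θ / σ ^ 2)
    (hS : S = (1 / 4) * ∫ v in (0 : ℝ)..t, Real.exp (-b * (t - v)) * σ ^ 2) (ω : ℝ) :
    Complex.exp (Complex.I * (ω : ℂ) *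
        (((r₀ * Real.exp (-b * t) : ℝ) : ℂ) / (1 - 2 * Complex.I * (ω : ℂ) * (S : ℂ)) +
          ∫ s in (0 : ℝ)..t,
            ((Real.exp (-b * (t - s)) * θ : ℝ) : ℂ) /
              (1 - 2 * Complex.I * (ω : ℂ) *
                (((1 / 4) * ∫ v in s..t, Real.exp (-b * (t - v)) * σ ^ 2 : ℝ) : ℂ)))) =
      Complex.exp (Complex.I * (ω : ℂ) *
          (((r₀ * Real.exp (-b * t) : ℝ) : ℂ) / (1 - 2 * Complex.I * (ω : ℂ) * (S : ℂ)))) *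
        (1 - 2 * Complex.I * (ω : ℂ) * (S : ℂ)) ^ (-(d : ℂ) / 2) :=
  cir_charFun_const_params_general t r₀ b σ θ d S hσ hd hS ω
end

section
/- Let b, θ, σ : [0,T] → ℝ be continuous with θ > 0, σ > 0, and let r₀ > 0. Define Σ(s,t) = (1/4) ∫_s^t exp(−∫_v^t b(u) du) σ²(v) dv and Φ(x,t) = exp( ix [ r₀ e^{−∫_0^t b(u)du} / (1 − 2ix Σ(0,t)) + ∫_0^t θ(s) e^{−∫_s^t b(u)du} / (1 − 2ix Σ(s,t)) ds ] ) for x ∈ ℝ, t ∈ [0,T]. Then the function f̂(x,t) := Φ(−x,t) satisfies the Fourier-transformed Fokker–Planck equation ∂f̂/∂t (x,t) = −i θ(t) x f̂(x,t) − ( b(t) x + (i σ²(t)/2) x² ) ∂f̂/∂x (x,t) for all x ∈ ℝ and all t ∈ (0,T), where ∂f̂/∂t is the derivative of the explicitly defined function. -/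
open intervalIntegral

/-- The characteristic function `Φ(x,t)` of the extended CIR rate. -/
noncomputable def cirPhi (b θ σ : ℝ → ℝ) (r₀ : ℝ) (x t : ℝ) : ℂ :=
  Complex.exp (Complex.I * (x : ℂ) *
    (((r₀ * Real.exp (-∫ u in (0 : ℝ)..t, b u) : ℝ) : ℂ) /
        (1 - 2 * Complex.I * (x : ℂ) * (cirSigma b σ 0 t : ℂ)) +
      ∫ s in (0 : ℝ)..t,
        ((θ s * Real.exp (-∫ u in s..t, b u) : ℝ) : ℂ) /
          (1 - 2 * Complex.I * (x : ℂ) * (cirSigma b σ s t : ℂ))))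

open MeasureTheory Set Filter Topology


noncomputable def Bf (b : ℝ → ℝ) (t : ℝ) : ℝ := ∫ u in (0:ℝ)..t, b u

noncomputable def Gf (b σ : ℝ → ℝ) (t : ℝ) : ℝ :=
  ∫ v in (0:ℝ)..t, Real.exp (Bf b v) * σ v ^ 2

noncomputable def Pf (b σ : ℝ → ℝ) (x t : ℝ) : ℂ :=
  ((Real.exp (Bf b t) : ℝ) : ℂ) - Complex.I * (x : ℂ) / 2 * ((Gf b σ t : ℝ) : ℂ)

noncomputable def Qf (b σ : ℝ → ℝ) (x s : ℝ) : ℂ :=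
  Complex.I * (x : ℂ) / 2 * ((Gf b σ s : ℝ) : ℂ)

noncomputable def cf (b θ : ℝ → ℝ) (s : ℝ) : ℂ :=
  ((θ s * Real.exp (Bf b s) : ℝ) : ℂ)

section basic

variable {b θ σ : ℝ → ℝ}

lemma hasDerivAt_Bf (hb : Continuous b) (t : ℝ) : HasDerivAt (Bf b) (b t) t :=
  integral_hasDerivAt_right (hb.intervalIntegrable 0 t)
    (hb.stronglyMeasurableAtFilter _ _) hb.continuousAt

lemma continuous_Bf (hb : Continuous b) : Continuous (Bf b) :=
  continuous_iff_continuousAt.2 fun t => (hasDerivAt_Bf hb t).continuousAt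

lemma continuous_Gf_integrand (hb : Continuous b) (hσ : Continuous σ) : Continuous fun v => Real.exp (Bf b v) * σ v ^ 2 :=
  (Real.continuous_exp.comp (continuous_Bf hb)).mul (hσ.pow 2)

lemma hasDerivAt_Gf (hb : Continuous b) (hσ : Continuous σ) (t : ℝ) :
    HasDerivAt (Gf b σ) (Real.exp (Bf b t) * σ t ^ 2) t :=
  integral_hasDerivAt_right ((continuous_Gf_integrand hb hσ).intervalIntegrable 0 t)
    ((continuous_Gf_integrand hb hσ).stronglyMeasurableAtFilter _ _)
    (continuous_Gf_integrand hb hσ).continuousAt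

lemma continuous_Gf (hb : Continuous b) (hσ : Continuous σ) : Continuous (Gf b σ) :=
  continuous_iff_continuousAt.2 fun t => (hasDerivAt_Gf hb hσ t).continuousAt

lemma PQ_re (x t s : ℝ) : (Pf b σ x t + Qf b σ x s).re = Real.exp (Bf b t) := by
  simp [Pf, Qf, Complex.div_re, -Complex.ofReal_exp]

lemma PQ_ne (x t s : ℝ) : Pf b σ x t + Qf b σ x s ≠ 0 := by
  intro h
  have h2 := congrArg Complex.re h
  rw [PQ_re] at h2
  simp only [Complex.zero_re] at h2
  exact (Real.exp_pos (Bf b t)).ne' h2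

lemma PQ_self (x t : ℝ) : Pf b σ x t + Qf b σ x t = ((Real.exp (Bf b t) : ℝ) : ℂ) := by
  simp [Pf, Qf]

lemma continuous_Pf (hb : Continuous b) (hσ : Continuous σ) (x : ℝ) :
    Continuous (fun t => Pf b σ x t) := by
  unfold Pf
  exact (Complex.continuous_ofReal.comp (Real.continuous_exp.comp (continuous_Bf hb))).sub
    (continuous_const.mul (Complex.continuous_ofReal.comp (continuous_Gf hb hσ)))

lemma continuous_Qf (hb : Continuous b) (hσ : Continuous σ) (x : ℝ) :
    Continuous (fun s => Qf b σ x s) := by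
  unfold Qf
  exact continuous_const.mul (Complex.continuous_ofReal.comp (continuous_Gf hb hσ))

lemma continuous_cf (hb : Continuous b) (hθ : Continuous θ) :
    Continuous (cf b θ) := by
  unfold cf
  exact Complex.continuous_ofReal.comp (hθ.mul (Real.continuous_exp.comp (continuous_Bf hb)))

end basic

/-- Derivative of a product where the first factor vanishes and the second is merely
continuous. -/
lemma hasDerivAt_mul_cont {P R : ℝ → ℂ} {p : ℂ} {t : ℝ} (hP : HasDerivAt P p t)
    (h0 : P t = 0) (hR : ContinuousAt R t) :
    HasDerivAt (fun τ => P τ * R τ) (p * R t) t := by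
  rw [hasDerivAt_iff_tendsto_slope] at hP ⊢
  have heq : ∀ᶠ τ in 𝓝[≠] t, slope P t τ * R τ = slope (fun τ => P τ * R τ) t τ := by
    filter_upwards with τ
    simp only [slope_def_module, h0, sub_zero, zero_mul, smul_mul_assoc]
  exact Tendsto.congr' heq (hP.mul (hR.tendsto.mono_left nhdsWithin_le_nhds))

/-- FTC for a continuous complex-valued integrand. -/
lemma hasDerivAt_primitive {ψ : ℝ → ℂ} (hψ : Continuous ψ) (a t : ℝ) :
    HasDerivAt (fun u => ∫ s in a..u, ψ s) (ψ t) t :=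
  integral_hasDerivAt_right (hψ.intervalIntegrable a t)
    (hψ.stronglyMeasurableAtFilter _ _) hψ.continuousAt

/-- Leibniz rule for `τ ↦ ∫_0^τ c(s)/(P(τ)+Q(s)) ds`. -/
lemma hasDerivAt_leibniz {P Q c : ℝ → ℂ} (hP : Continuous P) (hQ : Continuous Q)
    (hc : Continuous c) (hne : ∀ τ s, P τ + Q s ≠ 0) {p : ℂ} {t : ℝ}
    (hP' : HasDerivAt P p t) :
    HasDerivAt (fun τ => ∫ s in (0:ℝ)..τ, c s / (P τ + Q s))
      (c t / (P t + Q t) - p * ∫ s in (0:ℝ)..t, c s / (P t + Q s) ^ 2) t := by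
  set V : ℝ → ℂ := fun τ => ∫ s in (0:ℝ)..τ, c s / ((P τ + Q s) * (P t + Q s)) with hV
  have hcont : ∀ τ : ℝ, Continuous fun s => c s / (P τ + Q s) := fun τ =>
    hc.div (continuous_const.add hQ) (fun s => hne τ s)
  have hcont2 : ∀ τ : ℝ, Continuous fun s => c s / ((P τ + Q s) * (P t + Q s)) := fun τ =>
    hc.div ((continuous_const.add hQ).mul (continuous_const.add hQ))
      (fun s => mul_ne_zero (hne τ s) (hne t s))
  have hVcont : Continuous V := by
    rw [hV]
    apply intervalIntegral.continuous_parametric_intervalIntegral_of_continuous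
      (f := fun τ s => c s / ((P τ + Q s) * (P t + Q s))) _ continuous_id
    apply Continuous.div
    · exact hc.comp continuous_snd
    · exact (((hP.comp continuous_fst).add (hQ.comp continuous_snd)).mul
        (continuous_const.add (hQ.comp continuous_snd)))
    · rintro ⟨τ, s⟩
      exact mul_ne_zero (hne τ s) (hne t s)
  have hVt : V t = ∫ s in (0:ℝ)..t, c s / (P t + Q s) ^ 2 := by
    apply intervalIntegral.integral_congr
    intro s _
    simp [sq]
  have key : ∀ τ : ℝ, (∫ s in (0:ℝ)..τ, c s / (P τ + Q s)) =
      ((∫ s in (0:ℝ)..t, c s / (P t + Q s)) + ∫ s in t..τ, c s / (P t + Q s))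
        - (P τ - P t) * V τ := by
    intro τ
    have h1 : ∀ s : ℝ, c s / (P τ + Q s) =
        c s / (P t + Q s) - (P τ - P t) * (c s / ((P τ + Q s) * (P t + Q s))) := by
      intro s
      have h2 := hne τ s
      have h3 := hne t s
      field_simp
      ring
    rw [intervalIntegral.integral_congr (g := fun s =>
        c s / (P t + Q s) - (P τ - P t) * (c s / ((P τ + Q s) * (P t + Q s))))
        (fun s _ => h1 s),
      intervalIntegral.integral_sub ((hcont t).intervalIntegrable _ _)
        ((show Continuous fun s => (P τ - P t) * (c s / ((P τ + Q s) * (P t + Q s))) from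
          continuous_const.mul (hcont2 τ)).intervalIntegrable _ _),
      intervalIntegral.integral_const_mul,
      intervalIntegral.integral_add_adjacent_intervals ((hcont t).intervalIntegrable _ _)
        ((hcont t).intervalIntegrable _ _)]
  have hD : HasDerivAt (fun τ => ((∫ s in (0:ℝ)..t, c s / (P t + Q s))
      + ∫ s in t..τ, c s / (P t + Q s)) - (P τ - P t) * V τ)
      (c t / (P t + Q t) - p * V t) t := by
    have hA : HasDerivAt (fun τ => (∫ s in (0:ℝ)..t, c s / (P t + Q s))
        + ∫ s in t..τ, c s / (P t + Q s)) (c t / (P t + Q t)) t :=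
      (hasDerivAt_primitive (hcont t) t t).const_add _
    have hB : HasDerivAt (fun τ => (P τ - P t) * V τ) (p * V t) t := by
      refine hasDerivAt_mul_cont (hP'.sub_const _) (by simp) hVcont.continuousAt
    exact hA.sub hB
  rw [hVt] at hD
  exact hD.congr_of_eventuallyEq (Eventually.of_forall key)

/-- Derivative in the parameter of `y ↦ ∫_0^t c(s)/(a + y·m(s)) ds`. -/
lemma hasDerivAt_param {c m : ℝ → ℂ} {a : ℂ} (hc : Continuous c) (hm : Continuous m)
    (hne : ∀ (y : ℝ) (s : ℝ), a + (y : ℂ) * m s ≠ 0) (t x : ℝ) :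
    HasDerivAt (fun y : ℝ => ∫ s in (0:ℝ)..t, c s / (a + (y : ℂ) * m s))
      (-∫ s in (0:ℝ)..t, c s * m s / (a + (x : ℂ) * m s) ^ 2) x := by
  set U : ℝ → ℂ := fun y =>
    ∫ s in (0:ℝ)..t, c s * m s / ((a + (y : ℂ) * m s) * (a + (x : ℂ) * m s)) with hU
  have hcont : ∀ y : ℝ, Continuous fun s => c s / (a + (y : ℂ) * m s) := fun y =>
    hc.div (continuous_const.add (continuous_const.mul hm)) (fun s => hne y s)
  have hcont2 : ∀ y : ℝ, Continuous fun s =>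
      c s * m s / ((a + (y : ℂ) * m s) * (a + (x : ℂ) * m s)) := fun y =>
    (hc.mul hm).div ((continuous_const.add (continuous_const.mul hm)).mul
      (continuous_const.add (continuous_const.mul hm)))
      (fun s => mul_ne_zero (hne y s) (hne x s))
  have hUcont : Continuous U := by
    rw [hU]
    apply intervalIntegral.continuous_parametric_intervalIntegral_of_continuous'
      (f := fun (y : ℝ) (s : ℝ) => c s * m s / ((a + (y : ℂ) * m s) * (a + (x : ℂ) * m s)))
    apply Continuous.div
    · exact (hc.comp continuous_snd).mul (hm.comp continuous_snd)
    · exact ((continuous_const.add ((Complex.continuous_ofReal.comp continuous_fst).mul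
        (hm.comp continuous_snd))).mul
        (continuous_const.add (continuous_const.mul (hm.comp continuous_snd))))
    · rintro ⟨y, s⟩
      exact mul_ne_zero (hne y s) (hne x s)
  have hUx : U x = ∫ s in (0:ℝ)..t, c s * m s / (a + (x : ℂ) * m s) ^ 2 := by
    apply intervalIntegral.integral_congr
    intro s _
    simp [sq]
  have key : ∀ y : ℝ, (∫ s in (0:ℝ)..t, c s / (a + (y : ℂ) * m s)) =
      (∫ s in (0:ℝ)..t, c s / (a + (x : ℂ) * m s)) - ((y - x : ℝ) : ℂ) * U y := by
    intro y
    have h1 : ∀ s : ℝ, c s / (a + (y : ℂ) * m s) =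
        c s / (a + (x : ℂ) * m s) - ((y - x : ℝ) : ℂ) *
          (c s * m s / ((a + (y : ℂ) * m s) * (a + (x : ℂ) * m s))) := by
      intro s
      have h2 := hne y s
      have h3 := hne x s
      rw [mul_div_assoc', div_sub_div _ _ h3 (mul_ne_zero h2 h3),
        div_eq_div_iff h2 (mul_ne_zero h3 (mul_ne_zero h2 h3))]
      push_cast
      ring
    rw [intervalIntegral.integral_congr (g := fun s =>
        c s / (a + (x : ℂ) * m s) - ((y - x : ℝ) : ℂ) *
          (c s * m s / ((a + (y : ℂ) * m s) * (a + (x : ℂ) * m s)))) (fun s _ => h1 s),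
      intervalIntegral.integral_sub ((hcont x).intervalIntegrable _ _)
        ((show Continuous fun s => ((y - x : ℝ) : ℂ) *
          (c s * m s / ((a + (y : ℂ) * m s) * (a + (x : ℂ) * m s))) from
          continuous_const.mul (hcont2 y)).intervalIntegrable _ _),
      intervalIntegral.integral_const_mul]
  have hD : HasDerivAt (fun y : ℝ => (∫ s in (0:ℝ)..t, c s / (a + (x : ℂ) * m s))
      - ((y - x : ℝ) : ℂ) * U y) (-U x) x := by
    have hPd : HasDerivAt (fun y : ℝ => (((y - x : ℝ)) : ℂ)) 1 x := by
      have h2 : HasDerivAt (fun y : ℝ => ((y : ℝ) : ℂ)) 1 x := by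
        exact Complex.ofRealCLM.hasDerivAt (x := x)
      exact (h2.sub_const ((x : ℝ) : ℂ)).congr_of_eventuallyEq
        (Eventually.of_forall (fun y => by push_cast; ring))
    have hB : HasDerivAt (fun y : ℝ => (((y - x : ℝ)) : ℂ) * U y) (1 * U x) x :=
      hasDerivAt_mul_cont hPd (by simp) hUcont.continuousAt
    simpa using (hB.const_sub (∫ s in (0:ℝ)..t, c s / (a + (x : ℂ) * m s)))
  rw [hUx] at hD
  exact hD.congr_of_eventuallyEq (Eventually.of_forall key)

noncomputable def gf (b θ σ : ℝ → ℝ) (r₀ x t : ℝ) : ℂ :=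
  (r₀ : ℂ) / (Pf b σ x t + Qf b σ x 0) +
    ∫ s in (0:ℝ)..t, cf b θ s / (Pf b σ x t + Qf b σ x s)

noncomputable def Sf (b θ σ : ℝ → ℝ) (r₀ x t : ℝ) : ℂ :=
  (r₀ : ℂ) / (Pf b σ x t + Qf b σ x 0) ^ 2 +
    ∫ s in (0:ℝ)..t, cf b θ s / (Pf b σ x t + Qf b σ x s) ^ 2

section rewriting

variable {b θ σ : ℝ → ℝ}

lemma integral_b_eq (hb : Continuous b) (s t : ℝ) :
    (∫ u in s..t, b u) = Bf b t - Bf b s :=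
  (integral_interval_sub_left (hb.intervalIntegrable 0 t) (hb.intervalIntegrable 0 s)).symm

lemma sigma_eq (hb : Continuous b) (hσ : Continuous σ) (s t : ℝ) :
    cirSigma b σ s t = 1 / 4 * Real.exp (-(Bf b t)) * (Gf b σ t - Gf b σ s) := by
  unfold cirSigma
  have h1 : ∀ v : ℝ, Real.exp (-∫ u in v..t, b u) * σ v ^ 2 =
      Real.exp (-(Bf b t)) * (Real.exp (Bf b v) * σ v ^ 2) := by
    intro v
    rw [integral_b_eq hb, show -(Bf b t - Bf b v) = Bf b v + -Bf b t by ring, Real.exp_add]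
    ring
  have h2 : (∫ v in s..t, Real.exp (Bf b v) * σ v ^ 2) = Gf b σ t - Gf b σ s :=
    (integral_interval_sub_left ((continuous_Gf_integrand hb hσ).intervalIntegrable 0 t)
      ((continuous_Gf_integrand hb hσ).intervalIntegrable 0 s)).symm
  simp only [h1]
  rw [intervalIntegral.integral_const_mul, h2]
  ring

lemma denom_ne (b σ : ℝ → ℝ) (x s t : ℝ) :
    (1 : ℂ) - 2 * Complex.I * (x : ℂ) * ((cirSigma b σ s t : ℝ) : ℂ) ≠ 0 := by
  intro h
  have h2 := congrArg Complex.re h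
  simp [Complex.sub_re, Complex.mul_re, Complex.mul_im] at h2

lemma quot_eq (hb : Continuous b) (hσ : Continuous σ) (x t a s : ℝ) :
    ((a * Real.exp (-∫ u in s..t, b u) : ℝ) : ℂ) /
      (1 - 2 * Complex.I * (x : ℂ) * ((cirSigma b σ s t : ℝ) : ℂ)) =
    ((a * Real.exp (Bf b s) : ℝ) : ℂ) / (Pf b σ x t + Qf b σ x s) := by
  rw [div_eq_div_iff (denom_ne b σ x s t) (PQ_ne x t s)]
  rw [sigma_eq hb hσ, integral_b_eq hb]
  unfold Pf Qf
  push_cast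
  rw [show -((Bf b t : ℂ) - (Bf b s : ℂ)) = ↑(Bf b s) + -↑(Bf b t) by ring, Complex.exp_add,
    Complex.exp_neg]
  have hE := Complex.exp_ne_zero ((Bf b t : ℂ))
  field_simp
  ring

lemma phi_eq (hb : Continuous b) (hσ : Continuous σ) (r₀ x t : ℝ) :
    cirPhi b θ σ r₀ x t = Complex.exp (Complex.I * (x : ℂ) * gf b θ σ r₀ x t) := by
  unfold cirPhi gf
  congr 1
  congr 1
  congr 1
  · have := quot_eq (σ := σ) hb hσ x t r₀ 0
    rw [this]
    congr 2
    simp [Bf]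
  · apply intervalIntegral.integral_congr
    intro s _
    exact quot_eq hb hσ x t (θ s) s

end rewriting

noncomputable def pPf (b σ : ℝ → ℝ) (x t : ℝ) : ℂ :=
  ((Real.exp (Bf b t) * b t : ℝ) : ℂ) -
    Complex.I * (x : ℂ) / 2 * ((Real.exp (Bf b t) * σ t ^ 2 : ℝ) : ℂ)

noncomputable def mf (b σ : ℝ → ℝ) (t s : ℝ) : ℂ :=
  -(Complex.I / 2) * ((Gf b σ t - Gf b σ s : ℝ) : ℂ)

noncomputable def gxf (b θ σ : ℝ → ℝ) (r₀ x t : ℝ) : ℂ :=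
  -((r₀ : ℂ) * mf b σ t 0) / (Pf b σ x t + Qf b σ x 0) ^ 2 -
    ∫ s in (0:ℝ)..t, cf b θ s * mf b σ t s / (Pf b σ x t + Qf b σ x s) ^ 2

section gderiv

variable {b θ σ : ℝ → ℝ}

lemma hasDerivAt_Pf (hb : Continuous b) (hσ : Continuous σ) (x t : ℝ) :
    HasDerivAt (fun τ => Pf b σ x τ) (pPf b σ x t) t := by
  have h1 : HasDerivAt (fun τ => ((Real.exp (Bf b τ) : ℝ) : ℂ))
      ((Real.exp (Bf b t) * b t : ℝ) : ℂ) t := ((hasDerivAt_Bf hb t).exp).ofReal_comp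
  have h2 : HasDerivAt (fun τ => ((Gf b σ τ : ℝ) : ℂ))
      ((Real.exp (Bf b t) * σ t ^ 2 : ℝ) : ℂ) t := (hasDerivAt_Gf hb hσ t).ofReal_comp
  exact h1.sub (h2.const_mul _)

lemma D_form (b σ : ℝ → ℝ) (x t s : ℝ) :
    Pf b σ x t + Qf b σ x s =
      ((Real.exp (Bf b t) : ℝ) : ℂ) + (x : ℂ) * mf b σ t s := by
  unfold Pf Qf mf
  push_cast
  ring

lemma continuous_mf (hb : Continuous b) (hσ : Continuous σ) (t : ℝ) :
    Continuous (mf b σ t) :=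
  continuous_const.mul (Complex.continuous_ofReal.comp
    ((continuous_const.sub (continuous_Gf hb hσ))))

/-- `t`-derivative of `gf`. -/
lemma hasDerivAt_gf_t (hb : Continuous b) (hθ : Continuous θ) (hσ : Continuous σ)
    (r₀ x t : ℝ) :
    HasDerivAt (fun τ => gf b θ σ r₀ x τ)
      ((θ t : ℂ) - pPf b σ x t * Sf b θ σ r₀ x t) t := by
  have hP' := hasDerivAt_Pf hb hσ x t
  have h1 : HasDerivAt (fun τ => (r₀ : ℂ) / (Pf b σ x τ + Qf b σ x 0))
      (-((r₀ : ℂ) * pPf b σ x t) / (Pf b σ x t + Qf b σ x 0) ^ 2) t := by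
    have := (hasDerivAt_const t ((r₀ : ℝ) : ℂ)).div (hP'.add_const (Qf b σ x 0)) (PQ_ne x t 0)
    exact this.congr_deriv (by ring)
  have h2 : HasDerivAt (fun τ => ∫ s in (0:ℝ)..τ, cf b θ s / (Pf b σ x τ + Qf b σ x s))
      (cf b θ t / (Pf b σ x t + Qf b σ x t) -
        pPf b σ x t * ∫ s in (0:ℝ)..t, cf b θ s / (Pf b σ x t + Qf b σ x s) ^ 2) t :=
    hasDerivAt_leibniz (continuous_Pf hb hσ x) (continuous_Qf hb hσ x)
      (continuous_cf hb hθ) (fun τ s => PQ_ne x τ s) hP'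
  have h3 := h1.add h2
  have hval : -((r₀ : ℂ) * pPf b σ x t) / (Pf b σ x t + Qf b σ x 0) ^ 2 +
      (cf b θ t / (Pf b σ x t + Qf b σ x t) -
        pPf b σ x t * ∫ s in (0:ℝ)..t, cf b θ s / (Pf b σ x t + Qf b σ x s) ^ 2) =
      (θ t : ℂ) - pPf b σ x t * Sf b θ σ r₀ x t := by
    have hc : cf b θ t / (Pf b σ x t + Qf b σ x t) = (θ t : ℂ) := by
      rw [PQ_self]
      unfold cf
      push_cast
      exact mul_div_cancel_right₀ _ (Complex.exp_ne_zero _)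
    rw [hc]
    unfold Sf
    ring
  rw [hval] at h3
  exact h3

/-- `x`-derivative of `gf`. -/
lemma hasDerivAt_gf_x (hb : Continuous b) (hθ : Continuous θ) (hσ : Continuous σ)
    (r₀ x t : ℝ) :
    HasDerivAt (fun y : ℝ => gf b θ σ r₀ y t) (gxf b θ σ r₀ x t) x := by
  set a : ℂ := ((Real.exp (Bf b t) : ℝ) : ℂ) with ha
  have hne : ∀ (y : ℝ) (s : ℝ), a + (y : ℂ) * mf b σ t s ≠ 0 := by
    intro y s
    rw [← D_form]
    exact PQ_ne y t s
  have h1 : HasDerivAt (fun y : ℝ => (r₀ : ℂ) / (a + (y : ℂ) * mf b σ t 0))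
      (-((r₀ : ℂ) * mf b σ t 0) / (a + (x : ℂ) * mf b σ t 0) ^ 2) x := by
    have hden : HasDerivAt (fun y : ℝ => a + (y : ℂ) * mf b σ t 0) (mf b σ t 0) x := by
      have h2 : HasDerivAt (fun y : ℝ => ((y : ℝ) : ℂ)) 1 x := by
        exact Complex.ofRealCLM.hasDerivAt (x := x)
      simpa using (h2.mul_const (mf b σ t 0)).const_add a
    have := (hasDerivAt_const x ((r₀ : ℝ) : ℂ)).div hden (hne x 0)
    exact this.congr_deriv (by ring)
  have h2 : HasDerivAt (fun y : ℝ => ∫ s in (0:ℝ)..t, cf b θ s / (a + (y : ℂ) * mf b σ t s))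
      (-∫ s in (0:ℝ)..t, cf b θ s * mf b σ t s / (a + (x : ℂ) * mf b σ t s) ^ 2) x :=
    hasDerivAt_param (continuous_cf hb hθ) (continuous_mf hb hσ t) hne t x
  have h3 := h1.add h2
  have heq : (fun y : ℝ => (r₀ : ℂ) / (a + (y : ℂ) * mf b σ t 0) +
      ∫ s in (0:ℝ)..t, cf b θ s / (a + (y : ℂ) * mf b σ t s)) =
      fun y : ℝ => gf b θ σ r₀ y t := by
    funext y
    unfold gf
    rw [D_form]
    congr 1
    apply intervalIntegral.integral_congr
    intro s _
    simp only [D_form, ha]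
  simp only [Pi.add_def] at h3
  rw [heq] at h3
  have hval : -((r₀ : ℂ) * mf b σ t 0) / (a + (x : ℂ) * mf b σ t 0) ^ 2 +
      -∫ s in (0:ℝ)..t, cf b θ s * mf b σ t s / (a + (x : ℂ) * mf b σ t s) ^ 2 =
      gxf b θ σ r₀ x t := by
    unfold gxf
    rw [D_form, sub_eq_add_neg]
    congr 2
    apply intervalIntegral.integral_congr
    intro s _
    simp only [D_form, ha]
  rw [hval] at h3
  exact h3

/-- Key algebraic identity: `g + x·gₓ = e^{B t}·S`. -/
lemma key_identity (hb : Continuous b) (hθ : Continuous θ) (hσ : Continuous σ)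
    (r₀ x t : ℝ) :
    gf b θ σ r₀ x t + (x : ℂ) * gxf b θ σ r₀ x t =
      ((Real.exp (Bf b t) : ℝ) : ℂ) * Sf b θ σ r₀ x t := by
  set a : ℂ := ((Real.exp (Bf b t) : ℝ) : ℂ) with ha
  unfold gf gxf Sf
  have hint1 : IntervalIntegrable (fun s => cf b θ s / (Pf b σ x t + Qf b σ x s))
      volume 0 t :=
    ((continuous_cf hb hθ).div (continuous_const.add (continuous_Qf hb hσ x))
      (fun s => PQ_ne x t s)).intervalIntegrable _ _
  have hint2 : IntervalIntegrable
      (fun s => cf b θ s * mf b σ t s / (Pf b σ x t + Qf b σ x s) ^ 2) volume 0 t :=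
    (((continuous_cf hb hθ).mul (continuous_mf hb hσ t)).div
      ((continuous_const.add (continuous_Qf hb hσ x)).pow 2)
      (fun s => pow_ne_zero 2 (PQ_ne x t s))).intervalIntegrable _ _
  have hint3 : IntervalIntegrable (fun s => cf b θ s / (Pf b σ x t + Qf b σ x s) ^ 2)
      volume 0 t :=
    ((continuous_cf hb hθ).div ((continuous_const.add (continuous_Qf hb hσ x)).pow 2)
      (fun s => pow_ne_zero 2 (PQ_ne x t s))).intervalIntegrable _ _
  have hcomb : (∫ s in (0:ℝ)..t, cf b θ s / (Pf b σ x t + Qf b σ x s)) -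
      (x : ℂ) * (∫ s in (0:ℝ)..t, cf b θ s * mf b σ t s / (Pf b σ x t + Qf b σ x s) ^ 2) =
      a * ∫ s in (0:ℝ)..t, cf b θ s / (Pf b σ x t + Qf b σ x s) ^ 2 := by
    rw [← intervalIntegral.integral_const_mul, ← intervalIntegral.integral_const_mul,
      ← intervalIntegral.integral_sub hint1 (hint2.const_mul _)]
    apply intervalIntegral.integral_congr
    intro s _
    have hd := PQ_ne (b := b) (σ := σ) x t s
    have hDf := D_form b σ x t s
    field_simp
    rw [hDf]
    ring
  calc (r₀ : ℂ) / (Pf b σ x t + Qf b σ x 0) +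
        (∫ s in (0:ℝ)..t, cf b θ s / (Pf b σ x t + Qf b σ x s)) +
        (x : ℂ) * (-((r₀ : ℂ) * mf b σ t 0) / (Pf b σ x t + Qf b σ x 0) ^ 2 -
          ∫ s in (0:ℝ)..t, cf b θ s * mf b σ t s / (Pf b σ x t + Qf b σ x s) ^ 2) =
      ((r₀ : ℂ) / (Pf b σ x t + Qf b σ x 0) -
        (x : ℂ) * ((r₀ : ℂ) * mf b σ t 0) / (Pf b σ x t + Qf b σ x 0) ^ 2) +
      ((∫ s in (0:ℝ)..t, cf b θ s / (Pf b σ x t + Qf b σ x s)) -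
        (x : ℂ) * ∫ s in (0:ℝ)..t,
          cf b θ s * mf b σ t s / (Pf b σ x t + Qf b σ x s) ^ 2) := by ring
    _ = a * ((r₀ : ℂ) / (Pf b σ x t + Qf b σ x 0) ^ 2) +
        a * ∫ s in (0:ℝ)..t, cf b θ s / (Pf b σ x t + Qf b σ x s) ^ 2 := by
        rw [hcomb]
        congr 1
        have hd := PQ_ne (b := b) (σ := σ) x t 0
        have hDf := D_form b σ x t 0
        field_simp
        rw [hDf]
        ring
    _ = a * ((r₀ : ℂ) / (Pf b σ x t + Qf b σ x 0) ^ 2 +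
        ∫ s in (0:ℝ)..t, cf b θ s / (Pf b σ x t + Qf b σ x s) ^ 2) := by ring

end gderiv

section congrsec

variable {b θ σ b' θ' σ' : ℝ → ℝ} {T : ℝ}

lemma cirPhi_congr (hT : (0:ℝ) ≤ T)
    (hbe : ∀ u ∈ Icc (0:ℝ) T, b u = b' u) (hθe : ∀ u ∈ Icc (0:ℝ) T, θ u = θ' u)
    (hσe : ∀ u ∈ Icc (0:ℝ) T, σ u = σ' u) (r₀ x : ℝ) {τ : ℝ} (hτ : τ ∈ Icc (0:ℝ) T) :
    cirPhi b θ σ r₀ x τ = cirPhi b' θ' σ' r₀ x τ := by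
  have hsub : ∀ v w : ℝ, v ∈ Icc (0:ℝ) T → w ∈ Icc (0:ℝ) T → uIcc v w ⊆ Icc (0:ℝ) T := by
    intro v w hv hw
    rw [← uIcc_of_le hT]
    exact uIcc_subset_uIcc (by rwa [uIcc_of_le hT]) (by rwa [uIcc_of_le hT])
  have hB : ∀ v w : ℝ, v ∈ Icc (0:ℝ) T → w ∈ Icc (0:ℝ) T →
      (∫ u in v..w, b u) = ∫ u in v..w, b' u := by
    intro v w hv hw
    exact intervalIntegral.integral_congr (fun u hu => hbe u (hsub v w hv hw hu))
  have h0T : (0:ℝ) ∈ Icc (0:ℝ) T := ⟨le_refl 0, hT⟩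
  have hSig : ∀ s ∈ Icc (0:ℝ) T, cirSigma b σ s τ = cirSigma b' σ' s τ := by
    intro s hs
    unfold cirSigma
    congr 1
    apply intervalIntegral.integral_congr
    intro v hv
    have hvm : v ∈ Icc (0:ℝ) T := hsub s τ hs hτ hv
    simp only [hB v τ hvm hτ, hσe v hvm]
  unfold cirPhi
  rw [hB 0 τ h0T hτ, hSig 0 h0T]
  congr 2
  congr 1
  apply intervalIntegral.integral_congr
  intro s hs
  have hsm : s ∈ Icc (0:ℝ) T := hsub 0 τ h0T hτ hs
  simp only [hB s τ hsm hτ, hθe s hsm, hSig s hsm]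

end congrsec


/-- The function `f̂(x,t) = Φ(−x,t)` satisfies the Fourier-transformed Fokker–Planck equation
`∂f̂/∂t = −iθ(t)x f̂ − (b(t)x + iσ²(t)x²/2) ∂f̂/∂x` for all `x ∈ ℝ` and `t ∈ (0,T)`. -/
theorem cir_charFun_fokkerPlanck (T r₀ : ℝ) (hT : 0 < T) (hr₀ : 0 < r₀) (b θ σ : ℝ → ℝ)
    (hb : ContinuousOn b (Set.Icc 0 T)) (hθ : ContinuousOn θ (Set.Icc 0 T))
    (hσ : ContinuousOn σ (Set.Icc 0 T))
    (hθpos : ∀ s ∈ Set.Icc 0 T, 0 < θ s) (hσpos : ∀ s ∈ Set.Icc 0 T, 0 < σ s) :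
    ∀ x : ℝ, ∀ t ∈ Set.Ioo (0 : ℝ) T, ∃ fx ft : ℂ,
      HasDerivAt (fun y : ℝ => cirPhi b θ σ r₀ (-y) t) fx x ∧
      HasDerivAt (fun τ : ℝ => cirPhi b θ σ r₀ (-x) τ) ft t ∧
      ft = -Complex.I * (θ t : ℂ) * (x : ℂ) * cirPhi b θ σ r₀ (-x) t -
        ((b t : ℂ) * (x : ℂ) + Complex.I * (σ t : ℂ) ^ 2 / 2 * (x : ℂ) ^ 2) * fx := by
  intro x t ht
  set b' : ℝ → ℝ := Set.IccExtend hT.le ((Set.Icc (0:ℝ) T).restrict b) with hb'def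
  set θ' : ℝ → ℝ := Set.IccExtend hT.le ((Set.Icc (0:ℝ) T).restrict θ) with hθ'def
  set σ' : ℝ → ℝ := Set.IccExtend hT.le ((Set.Icc (0:ℝ) T).restrict σ) with hσ'def
  have hbc : Continuous b' := hb.restrict.Icc_extend'
  have hθc : Continuous θ' := hθ.restrict.Icc_extend'
  have hσc : Continuous σ' := hσ.restrict.Icc_extend'
  have hbe : ∀ u ∈ Set.Icc (0:ℝ) T, b u = b' u := fun u hu =>
    (Set.IccExtend_of_mem hT.le ((Set.Icc (0:ℝ) T).restrict b) hu).symm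
  have hθe : ∀ u ∈ Set.Icc (0:ℝ) T, θ u = θ' u := fun u hu =>
    (Set.IccExtend_of_mem hT.le ((Set.Icc (0:ℝ) T).restrict θ) hu).symm
  have hσe : ∀ u ∈ Set.Icc (0:ℝ) T, σ u = σ' u := fun u hu =>
    (Set.IccExtend_of_mem hT.le ((Set.Icc (0:ℝ) T).restrict σ) hu).symm
  have htm : t ∈ Set.Icc (0:ℝ) T := ⟨ht.1.le, ht.2.le⟩
  have hphi : ∀ y τ : ℝ, cirPhi b' θ' σ' r₀ y τ =
      Complex.exp (Complex.I * (y : ℂ) * gf b' θ' σ' r₀ y τ) := fun y τ =>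
    phi_eq hbc hσc r₀ y τ
  -- x-derivative
  have hneg1 : HasDerivAt (fun y : ℝ => ((-y : ℝ) : ℂ)) (-1) x := by
    have h2 : HasDerivAt (fun y : ℝ => ((y : ℝ) : ℂ)) 1 (-x) := by
      exact Complex.ofRealCLM.hasDerivAt (x := -x)
    have h3 := h2.scomp x (hasDerivAt_neg x)
    simpa [Function.comp_def] using h3
  have hu : HasDerivAt (fun y : ℝ => Complex.I * ((-y : ℝ) : ℂ)) (Complex.I * (-1)) x :=
    hneg1.const_mul Complex.I
  have hgneg : HasDerivAt (fun y : ℝ => gf b' θ' σ' r₀ (-y) t)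
      (gxf b' θ' σ' r₀ (-x) t * (-1)) x := by
    have h3 := (hasDerivAt_gf_x hbc hθc hσc r₀ (-x) t).scomp x (hasDerivAt_neg x)
    simpa [Function.comp_def] using h3
  have hx' := (hu.mul hgneg).cexp
  have hxfun : (fun y : ℝ => cirPhi b θ σ r₀ (-y) t) =
      fun y : ℝ => Complex.exp (Complex.I * ((-y : ℝ) : ℂ) * gf b' θ' σ' r₀ (-y) t) := by
    funext y
    rw [cirPhi_congr hT.le hbe hθe hσe r₀ (-y) htm, hphi]
  simp only [Pi.mul_apply] at hx'
  rw [← hxfun] at hx'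
  -- t-derivative
  have ht1 := ((hasDerivAt_gf_t hbc hθc hσc r₀ (-x) t).const_mul
    (Complex.I * ((-x : ℝ) : ℂ))).cexp
  have htfun : (fun τ : ℝ => cirPhi b θ σ r₀ (-x) τ) =ᶠ[nhds t]
      fun τ : ℝ => Complex.exp (Complex.I * ((-x : ℝ) : ℂ) * gf b' θ' σ' r₀ (-x) τ) := by
    filter_upwards [isOpen_Ioo.mem_nhds ht] with τ hτ
    rw [cirPhi_congr hT.le hbe hθe hσe r₀ (-x) ⟨hτ.1.le, hτ.2.le⟩, hphi]
  have ht' := ht1.congr_of_eventuallyEq htfun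
  refine ⟨_, _, hx', ht', ?_⟩
  rw [cirPhi_congr hT.le hbe hθe hσe r₀ (-x) htm, hphi]
  have hkey := key_identity hbc hθc hσc r₀ (-x) t
  have hbt : b' t = b t := (hbe t htm).symm
  have hθt : θ' t = θ t := (hθe t htm).symm
  have hσt : σ' t = σ t := (hσe t htm).symm
  unfold pPf
  rw [hbt, hθt, hσt]
  push_cast at hkey ⊢
  linear_combination (-(((b t : ℂ) * (x : ℂ) + Complex.I * (σ t : ℂ) ^ 2 / 2 * (x : ℂ) ^ 2) *
    Complex.I * Complex.exp (Complex.I * (-(x : ℂ)) * gf b' θ' σ' r₀ (-x) t))) * hkey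
end

section
/- (Riemann-sum limit from the proof of Lemma 2.7, logarithmic factor.) Let t > 0, ω ∈ ℝ, let b, σ : [0,t] → ℝ be continuous with σ > 0, and let d : [0,t] → ℝ be continuously differentiable. For a positive integer K put Δ = t/K and define S_K = (1/2) ∑_{j=0}^{K−1} [ d((j+1)Δ) − d(jΔ) ] · Log( 1 − 2iω ∑_{k=j}^{K−1} exp( −Δ ∑_{l=k+1}^{K−1} b(lΔ) ) · σ²(kΔ) Δ/4 ). Then lim_{K→∞} S_K = (1/2) ∫_0^t d′(s) Log( 1 − 2iω ∫_s^t exp(−∫_v^t b(u) du) σ²(v)/4 dv ) ds, where Log is the principal complex logarithm (all arguments have real part 1, so Log is well defined). -/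
/-!
On the cell `[j t/K, (j+1) t/K]` containing `s`, the real number inside the logarithm converges to
`Σ(s,t)` uniformly in `j` and `s`: the inner sums are tail Riemann sums of `b`, and tail Riemann sums
of a continuous function converge to `∫_s^t` uniformly over the cells. Uniform convergence on cells
survives composition with continuous maps, and it turns the outer sum into the integral once each
increment `d((j+1) t/K) - d(j t/K)` is written as `∫ d'` over its cell.
-/

open intervalIntegral Filter
open Set MeasureTheory

section Cells

variable {E : Type*} [NormedAddCommGroup E] {t : ℝ}

lemma natCast_mul_div_mem_Icc (ht : 0 ≤ t) {j K : ℕ} (hj : j ≤ K) :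
    (j : ℝ) * (t / K) ∈ Icc 0 t := by
  refine ⟨by positivity, ?_⟩
  rw [mul_div_assoc', mul_div_right_comm]
  exact mul_le_of_le_one_left ht (div_le_one_of_le₀ (by exact_mod_cast hj) K.cast_nonneg)

lemma cell_subset_Icc (ht : 0 ≤ t) {j K : ℕ} (hj : j < K) :
    Icc (j * (t / K)) ((j + 1) * (t / K)) ⊆ Icc 0 t := by
  have hsucc := natCast_mul_div_mem_Icc ht (Nat.succ_le_of_lt hj)
  push_cast at hsucc
  exact Icc_subset_Icc (natCast_mul_div_mem_Icc ht hj.le).1 hsucc.2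

def TendstoUniformlyOnCells (t : ℝ) (a : ℕ → ℕ → E) (G : ℝ → E) : Prop :=
  ∀ ε > 0, ∀ᶠ K : ℕ in atTop, ∀ j < K, ∀ s ∈ Icc (j * (t / K)) ((j + 1) * (t / K)),
    ‖a K j - G s‖ ≤ ε

lemma tendstoUniformlyOnCells_sample (ht : 0 ≤ t) {f : ℝ → E} (hf : ContinuousOn f (Icc 0 t)) :
    TendstoUniformlyOnCells t (fun K j => f (j * (t / K))) f := by
  intro ε hε
  obtain ⟨δ, hδ, hfδ⟩ := Metric.uniformContinuousOn_iff_le.1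
    (isCompact_Icc.uniformContinuousOn_of_continuous hf) ε hε
  filter_upwards [(tendsto_const_div_atTop_nhds_zero_nat t).eventually (ge_mem_nhds hδ)]
    with K hK j hj s hs
  have hcell := cell_subset_Icc ht hj
  rw [← dist_eq_norm]
  refine hfδ _ (hcell ⟨le_rfl, by nlinarith [hs.1, hs.2]⟩) _ (hcell hs) ?_
  rw [Real.dist_eq, abs_sub_comm, abs_of_nonneg (by linarith [hs.1])]
  linarith [hs.2]

namespace TendstoUniformlyOnCells

variable {a : ℕ → ℕ → E} {G : ℝ → E}

lemma prodMk {F : Type*} [NormedAddCommGroup F] {a' : ℕ → ℕ → F} {G' : ℝ → F}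
    (ha : TendstoUniformlyOnCells t a G) (ha' : TendstoUniformlyOnCells t a' G') :
    TendstoUniformlyOnCells t (fun K j => (a K j, a' K j)) (fun s => (G s, G' s)) := by
  intro ε hε
  filter_upwards [ha ε hε, ha' ε hε] with K h h' j hj s hs
  exact norm_prod_le_iff.2 ⟨h j hj s hs, h' j hj s hs⟩

lemma comp {F : Type*} [NormedAddCommGroup F] (ha : TendstoUniformlyOnCells t a G) (ht : 0 ≤ t)
    (hG : ContinuousOn G (Icc 0 t)) {φ : E → F} (hφ : Continuous φ) :
    TendstoUniformlyOnCells t (fun K j => φ (a K j)) (fun s => φ (G s)) := by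
  intro ε hε
  obtain ⟨η, hη, hφη⟩ := Metric.mem_uniformity_dist.1 <|
    (isCompact_Icc.image_of_continuousOn hG).uniformContinuousAt_of_continuousAt φ
      (fun x _ => hφ.continuousAt) (Metric.dist_mem_uniformity hε)
  filter_upwards [ha (η / 2) (half_pos hη)] with K hK j hj s hs
  have hclose : dist (G s) (a K j) < η := by
    rw [dist_comm, dist_eq_norm]
    linarith [hK j hj s hs]
  rw [← dist_eq_norm, dist_comm]
  exact (hφη hclose ⟨s, cell_subset_Icc ht hj hs, rfl⟩).le

end TendstoUniformlyOnCells

end Cells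

lemma integral_eq_sub_of_hasDerivWithinAt_Icc {d d' : ℝ → ℝ} {u v : ℝ} (huv : u ≤ v)
    (hd : ∀ s ∈ Icc u v, HasDerivWithinAt d (d' s) (Icc u v) s)
    (hd' : IntervalIntegrable d' volume u v) :
    ∫ s in u..v, d' s = d v - d u :=
  integral_eq_sub_of_hasDerivAt_of_le huv (fun s hs => (hd s hs).continuousWithinAt)
    (fun s hs => (hd s (Ioo_subset_Icc_self hs)).hasDerivAt (Icc_mem_nhds hs.1 hs.2)) hd'

lemma norm_sub_smul_sub_integral_le {E : Type*} [NormedAddCommGroup E] [NormedSpace ℝ E]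
    [CompleteSpace E] {d d' : ℝ → ℝ} {G : ℝ → E} {u v M η : ℝ} {c : E} (huv : u ≤ v)
    (hd : ∀ s ∈ Icc u v, HasDerivWithinAt d (d' s) (Icc u v) s)
    (hd' : ContinuousOn d' (Icc u v)) (hG : ContinuousOn G (Icc u v))
    (hM : ∀ s ∈ Icc u v, |d' s| ≤ M) (hc : ∀ s ∈ Icc u v, ‖c - G s‖ ≤ η) :
    ‖(d v - d u) • c - ∫ s in u..v, d' s • G s‖ ≤ (v - u) * (M * η) := by
  have hint : ∀ {f : ℝ → ℝ} {g : ℝ → E}, ContinuousOn f (Icc u v) → ContinuousOn g (Icc u v) →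
      IntervalIntegrable (fun s => f s • g s) volume u v :=
    fun hf hg => (hf.smul hg).intervalIntegrable_of_Icc huv
  rw [← integral_eq_sub_of_hasDerivWithinAt_Icc huv hd (hd'.intervalIntegrable_of_Icc huv),
    ← intervalIntegral.integral_smul_const, ← integral_sub (hint hd' continuousOn_const)
    (hint hd' hG)]
  simp_rw [← smul_sub]
  have hbound : ∀ s ∈ uIoc u v, ‖d' s • (c - G s)‖ ≤ M * η := fun s hs => by
    have hs' : s ∈ Icc u v := Ioc_subset_Icc_self (uIoc_of_le huv ▸ hs)
    rw [norm_smul, Real.norm_eq_abs]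
    exact mul_le_mul (hM s hs') (hc s hs') (norm_nonneg _) ((abs_nonneg _).trans (hM s hs'))
  simpa [abs_of_nonneg (sub_nonneg.2 huv), mul_comm] using
    norm_integral_le_of_norm_le_const hbound

section TailSum

variable {E : Type*} [NormedAddCommGroup E] [NormedSpace ℝ E] [CompleteSpace E] {t : ℝ}
  {d d' : ℝ → ℝ} {G : ℝ → E}

lemma norm_sum_smul_sub_integral_le (ht : 0 ≤ t) {M η : ℝ} {c : ℕ → E} {j K : ℕ} (hj : j < K)
    (hd : ∀ s ∈ Icc 0 t, HasDerivWithinAt d (d' s) (Icc 0 t) s)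
    (hd' : ContinuousOn d' (Icc 0 t)) (hG : ContinuousOn G (Icc 0 t))
    (hM : ∀ s ∈ Icc 0 t, |d' s| ≤ M)
    (hc : ∀ k ∈ Finset.Ico j K, ∀ s ∈ Icc (k * (t / K)) ((k + 1) * (t / K)), ‖c k - G s‖ ≤ η) :
    ‖∑ k ∈ Finset.Ico j K, (d ((k + 1) * (t / K)) - d (k * (t / K))) • c k -
      ∫ s in j * (t / K)..t, d' s • G s‖ ≤ t * (M * η) := by
  have hK : (K : ℝ) ≠ 0 := Nat.cast_ne_zero.2 (by omega)
  have hΔ : 0 ≤ t / K := by positivity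
  have hcell_le (k : ℕ) : (k : ℝ) * (t / K) ≤ (k + 1) * (t / K) := by nlinarith
  have hMη : 0 ≤ M * η := mul_nonneg ((abs_nonneg _).trans (hM 0 ⟨le_rfl, ht⟩))
    ((norm_nonneg _).trans (hc j (Finset.left_mem_Ico.2 hj) _ (left_mem_Icc.2 (hcell_le j))))
  have hsplit : ∫ s in j * (t / K)..t, d' s • G s =
      ∑ k ∈ Finset.Ico j K, ∫ s in k * (t / K)..(k + 1) * (t / K), d' s • G s := by
    have h := sum_integral_adjacent_intervals_Ico (a := fun k : ℕ => k * (t / K))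
      (μ := volume) (f := fun s => d' s • G s) hj.le fun k hk =>
      ((hd'.smul hG).mono (by exact_mod_cast cell_subset_Icc ht hk.2)).intervalIntegrable_of_Icc
        (by exact_mod_cast hcell_le k)
    push_cast at h
    rw [h, mul_div_cancel₀ t hK]
  rw [hsplit, ← Finset.sum_sub_distrib]
  calc _ ≤ ∑ k ∈ Finset.Ico j K, t / K * (M * η) := by
        refine norm_sum_le_of_le _ fun k hk => ?_
        have hcell := cell_subset_Icc ht (Finset.mem_Ico.1 hk).2
        have h := norm_sub_smul_sub_integral_le (hcell_le k)
          (fun s hs => (hd s (hcell hs)).mono hcell) (hd'.mono hcell) (hG.mono hcell)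
          (fun s hs => hM s (hcell hs)) (hc k hk)
        rwa [show (k + 1) * (t / K) - k * (t / K) = t / K by ring] at h
    _ ≤ K * (t / K) * (M * η) := by
        rw [Finset.sum_const, Nat.card_Ico, nsmul_eq_mul, ← mul_assoc]
        gcongr
        exact_mod_cast Nat.sub_le K j
    _ = t * (M * η) := by rw [mul_div_cancel₀ t hK]

lemma TendstoUniformlyOnCells.tail_sum {a : ℕ → ℕ → E} (ha : TendstoUniformlyOnCells t a G)
    (ht : 0 ≤ t) (hd : ∀ s ∈ Icc 0 t, HasDerivWithinAt d (d' s) (Icc 0 t) s)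
    (hd' : ContinuousOn d' (Icc 0 t)) (hG : ContinuousOn G (Icc 0 t)) :
    TendstoUniformlyOnCells t
      (fun K j => ∑ k ∈ Finset.Ico j K, (d ((k + 1) * (t / K)) - d (k * (t / K))) • a K k)
      (fun s => ∫ v in s..t, d' v • G v) := by
  intro ε hε
  obtain ⟨M, hM⟩ := isCompact_Icc.exists_bound_of_continuousOn hd'
  obtain ⟨N, hN⟩ := isCompact_Icc.exists_bound_of_continuousOn (hd'.smul hG)
  have hM0 : 0 ≤ M := (norm_nonneg _).trans (hM 0 ⟨le_rfl, ht⟩)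
  have hN0 : 0 ≤ N := (norm_nonneg _).trans (hN 0 ⟨le_rfl, ht⟩)
  set η := ε / (2 * (t * M + 1))
  have hη : 0 < η := by positivity
  have htMη : t * (M * η) ≤ ε / 2 := by
    rw [← mul_assoc, mul_div_assoc', div_le_div_iff₀ (by positivity) two_pos]
    nlinarith [mul_nonneg ht hM0]
  filter_upwards [ha η hη, (tendsto_const_div_atTop_nhds_zero_nat t).eventually
    (ge_mem_nhds (show 0 < ε / (2 * (N + 1)) by positivity))] with K hK hKN j hj s hs
  have hcell := cell_subset_Icc ht hj
  have hjs : j * (t / K) ≤ s := hs.1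
  have hgrid := hcell (left_mem_Icc.2 (hjs.trans hs.2))
  have hint : ∀ x ∈ Icc 0 t, IntervalIntegrable (fun v => d' v • G v) volume
      (j * (t / K)) x := fun x hx =>
    ((hd'.smul hG).mono (uIcc_subset_Icc hgrid hx)).intervalIntegrable
  rw [← integral_interval_sub_left (hint t ⟨ht, le_rfl⟩) (hint s (hcell hs)), sub_sub_eq_add_sub,
    add_sub_right_comm]
  have hsum := norm_sum_smul_sub_integral_le ht hj hd hd' hG hM
    fun k hk => hK k (Finset.mem_Ico.1 hk).2
  have hshift : ‖∫ v in j * (t / K)..s, d' v • G v‖ ≤ ε / 2 := by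
    calc _ ≤ N * |s - j * (t / K)| := norm_integral_le_of_norm_le_const fun v hv =>
          hN v (uIcc_subset_Icc hgrid (hcell hs) (uIoc_subset_uIcc hv))
      _ ≤ (ε / (2 * (N + 1))) * (N + 1) := by
          rw [abs_of_nonneg (sub_nonneg.2 hjs)]
          nlinarith [hs.2]
      _ = ε / 2 := by field_simp
  calc _ ≤ _ := norm_add_le _ _
    _ ≤ ε / 2 + ε / 2 := add_le_add (hsum.trans htMη) hshift
    _ = ε := add_halves ε

end TailSum

section Riemann

variable {E : Type*} [NormedAddCommGroup E] {t : ℝ} {a : ℕ → ℕ → E} {G : ℝ → E}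

lemma TendstoUniformlyOnCells.tendsto_apply_zero (ha : TendstoUniformlyOnCells t a G)
    (ht : 0 ≤ t) : Tendsto (fun K => a K 0) atTop (nhds (G 0)) := by
  refine Metric.tendsto_nhds.2 fun ε hε => ?_
  filter_upwards [ha (ε / 2) (half_pos hε), eventually_gt_atTop 0] with K hK hK0
  rw [dist_eq_norm]
  have h := hK 0 hK0 0 ⟨by simp, by positivity⟩
  linarith

lemma TendstoUniformlyOnCells.riemannSum [NormedSpace ℝ E] [CompleteSpace E]
    (ha : TendstoUniformlyOnCells t a G) (ht : 0 ≤ t) (hG : ContinuousOn G (Icc 0 t)) :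
    TendstoUniformlyOnCells t (fun K j => ∑ k ∈ Finset.Ico j K, (t / K) • a K k)
      (fun s => ∫ v in s..t, G v) := by
  simpa only [id, add_one_mul, add_sub_cancel_left, one_smul] using
    ha.tail_sum ht (d := id) (d' := fun _ => 1) (fun s _ => hasDerivWithinAt_id s _)
      continuousOn_const hG

lemma tendstoUniformlyOnCells_riemannSum_succ (ht : 0 ≤ t) {f : ℝ → ℝ}
    (hf : ContinuousOn f (Icc 0 t)) :
    TendstoUniformlyOnCells t (fun K j => t / K * ∑ k ∈ Finset.Ico (j + 1) K, f (k * (t / K)))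
      (fun s => ∫ v in s..t, f v) := by
  intro ε hε
  obtain ⟨M, hM⟩ := isCompact_Icc.exists_bound_of_continuousOn hf
  have hM0 : 0 ≤ M := (norm_nonneg _).trans (hM 0 ⟨le_rfl, ht⟩)
  have hmesh : Tendsto (fun K : ℕ => t / K * M) atTop (nhds 0) := by
    simpa using (tendsto_const_div_atTop_nhds_zero_nat t).mul_const M
  filter_upwards [((tendstoUniformlyOnCells_sample ht hf).riemannSum ht hf) (ε / 2) (half_pos hε),
    hmesh.eventually (ge_mem_nhds (half_pos hε))] with K hK hKM j hj s hs
  have hsum := hK j hj s hs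
  have hfirst : |t / K * f (j * (t / K))| ≤ t / K * M := by
    rw [abs_mul, abs_of_nonneg (by positivity)]
    exact mul_le_mul_of_nonneg_left (hM _ (natCast_mul_div_mem_Icc ht hj.le)) (by positivity)
  simp only [Finset.sum_eq_sum_Ico_succ_bot hj, smul_eq_mul, ← Finset.mul_sum,
    Real.norm_eq_abs] at hsum ⊢
  have htriangle := abs_sub (t / K * f (j * (t / K)) +
    t / K * ∑ k ∈ Finset.Ico (j + 1) K, f (k * (t / K)) - ∫ v in s..t, f v) (t / K * f (j * (t / K)))
  rw [add_sub_assoc, add_sub_cancel_left] at htriangle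
  rw [add_sub_assoc] at hsum
  linarith

end Riemann

section Kernel

variable {t : ℝ} {b σ : ℝ → ℝ}

lemma continuousOn_integral_Icc_left (ht : 0 ≤ t) {f : ℝ → ℝ} (hf : ContinuousOn f (Icc 0 t)) :
    ContinuousOn (fun s => ∫ v in s..t, f v) (Icc 0 t) := by
  rw [← uIcc_of_le ht] at hf ⊢
  exact continuousOn_primitive_interval_left (hf.integrableOn_compact isCompact_uIcc)

lemma continuousOn_cirSigma_integrand (ht : 0 ≤ t) (hb : ContinuousOn b (Icc 0 t))
    (hσ : ContinuousOn σ (Icc 0 t)) :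
    ContinuousOn (fun v => Real.exp (-∫ u in v..t, b u) * σ v ^ 2 / 4) (Icc 0 t) :=
  (((continuousOn_integral_Icc_left ht hb).neg.rexp).mul (hσ.pow 2)).div_const 4

lemma cirSigma_eq_integral (b σ : ℝ → ℝ) (s t : ℝ) :
    cirSigma b σ s t = ∫ v in s..t, Real.exp (-∫ u in v..t, b u) * σ v ^ 2 / 4 := by
  rw [cirSigma, intervalIntegral.integral_div, one_div_mul_eq_div]

lemma tendstoUniformlyOnCells_cirSigma (ht : 0 ≤ t) (hb : ContinuousOn b (Icc 0 t))
    (hσ : ContinuousOn σ (Icc 0 t)) :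
    TendstoUniformlyOnCells t
      (fun K j => ∑ k ∈ Finset.Ico j K,
        Real.exp (-(t / K) * ∑ l ∈ Finset.Ico (k + 1) K, b (l * (t / K))) *
          σ (k * (t / K)) ^ 2 * (t / K) / 4)
      (fun s => cirSigma b σ s t) := by
  have hsummand := ((tendstoUniformlyOnCells_riemannSum_succ ht hb).prodMk
    (tendstoUniformlyOnCells_sample ht hσ)).comp ht
    ((continuousOn_integral_Icc_left ht hb).prodMk hσ)
    (φ := fun p : ℝ × ℝ => Real.exp (-p.1) * p.2 ^ 2 / 4) (by fun_prop)
  convert hsummand.riemannSum ht (continuousOn_cirSigma_integrand ht hb hσ) using 3 with K j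
  · refine Finset.sum_congr rfl fun k _ => ?_
    rw [smul_eq_mul, neg_mul]
    ring
  · exact cirSigma_eq_integral b σ _ t

end Kernel

lemma continuous_log_one_sub_two_I_mul (ω : ℝ) :
    Continuous fun x : ℝ => Complex.log (1 - 2 * Complex.I * ω * x) :=
  (by fun_prop : Continuous fun x : ℝ => 1 - 2 * Complex.I * ω * x).clog fun x =>
    Complex.mem_slitPlane_iff.2 (Or.inl (by simp))

theorem cir_log_factor_riemann_limit_general (t ω : ℝ) (ht : 0 < t) (b σ d d' : ℝ → ℝ)
    (hb : ContinuousOn b (Set.Icc 0 t)) (hσ : ContinuousOn σ (Set.Icc 0 t))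
    (hd : ∀ s ∈ Set.Icc 0 t, HasDerivWithinAt d (d' s) (Set.Icc 0 t) s)
    (hd' : ContinuousOn d' (Set.Icc 0 t)) :
    Tendsto
      (fun K : ℕ =>
        (1 / 2 : ℂ) * ∑ j ∈ Finset.range K,
          ((d ((j + 1) * (t / K)) - d (j * (t / K)) : ℝ) : ℂ) *
            Complex.log (1 - 2 * Complex.I * (ω : ℂ) *
              ((∑ k ∈ Finset.Ico j K,
                Real.exp (-(t / K) * ∑ l ∈ Finset.Ico (k + 1) K, b (l * (t / K))) *
                  (σ (k * (t / K))) ^ 2 * (t / K) / 4 : ℝ) : ℂ)))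
      atTop
      (nhds ((1 / 2 : ℂ) * ∫ s in (0 : ℝ)..t,
        (d' s : ℂ) * Complex.log (1 - 2 * Complex.I * (ω : ℂ) * (cirSigma b σ s t : ℂ)))) := by
  have hSigma : ContinuousOn (fun s => cirSigma b σ s t) (Icc 0 t) := by
    simpa only [cirSigma_eq_integral] using
      continuousOn_integral_Icc_left ht.le (continuousOn_cirSigma_integrand ht.le hb hσ)
  have hΦ := continuous_log_one_sub_two_I_mul ω
  have hlim := ((((tendstoUniformlyOnCells_cirSigma ht.le hb hσ).comp ht.le hSigma hΦ).tail_sum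
    ht.le hd hd' (hΦ.comp_continuousOn hSigma)).tendsto_apply_zero ht.le).const_mul (1 / 2 : ℂ)
  simpa only [Finset.range_eq_Ico, Complex.real_smul] using hlim

/-- Riemann-sum limit from the proof of Lemma 2.7 (logarithmic factor): with `Δ = t/K`,
`S_K = (1/2) ∑_{j<K} [d((j+1)Δ) − d(jΔ)] Log(1 − 2iω ∑_{k=j}^{K−1} e^{−Δ∑_{l=k+1}^{K−1} b(lΔ)} σ²(kΔ)Δ/4)`
converges to `(1/2) ∫_0^t d′(s) Log(1 − 2iω Σ(s,t)) ds` as `K → ∞`. -/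
theorem cir_log_factor_riemann_limit (t ω : ℝ) (ht : 0 < t) (b σ d d' : ℝ → ℝ)
    (hb : ContinuousOn b (Set.Icc 0 t)) (hσ : ContinuousOn σ (Set.Icc 0 t))
    (hσpos : ∀ s ∈ Set.Icc 0 t, 0 < σ s)
    (hd : ∀ s ∈ Set.Icc 0 t, HasDerivWithinAt d (d' s) (Set.Icc 0 t) s)
    (hd' : ContinuousOn d' (Set.Icc 0 t)) :
    Tendsto
      (fun K : ℕ =>
        (1 / 2 : ℂ) * ∑ j ∈ Finset.range K,
          ((d ((j + 1) * (t / K)) - d (j * (t / K)) : ℝ) : ℂ) *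
            Complex.log (1 - 2 * Complex.I * (ω : ℂ) *
              ((∑ k ∈ Finset.Ico j K,
                Real.exp (-(t / K) * ∑ l ∈ Finset.Ico (k + 1) K, b (l * (t / K))) *
                  (σ (k * (t / K))) ^ 2 * (t / K) / 4 : ℝ) : ℂ)))
      atTop
      (nhds ((1 / 2 : ℂ) * ∫ s in (0 : ℝ)..t,
        (d' s : ℂ) * Complex.log (1 - 2 * Complex.I * (ω : ℂ) * (cirSigma b σ s t : ℂ)))) :=
  cir_log_factor_riemann_limit_general t ω ht b σ d d' hb hσ hd hd'
end

section
/- (Global solvability of the bond-price Riccati equation.) Let b, σ : [0,T] → ℝ be continuous with σ > 0. Then there exists a unique continuously differentiable function C(·,T) : [0,T] → ℝ satisfying the Riccati equation ∂C/∂t (t,T) − b(t) C(t,T) − (1/2) σ²(t) C(t,T)² + 1 = 0 with terminal condition C(T,T) = 0, and this solution satisfies 0 ≤ C(t,T) for all t ∈ [0,T]; moreover it is bounded on [0,T]. -/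
/-!
Clamp the state to `[0, M]` and solve the clamped equation backward from `C T = 0`: its
right-hand side is bounded and globally Lipschitz in the state, so Picard–Lindelöf gives a
solution on all of `[0, T]`. At states `≤ 0` the right-hand side is `-1 < 0`, and at states
`≥ M` it is positive once `M` is large compared with `sup |b| / min σ²`; read backward in
time, the solution is therefore pushed up at `0` and down at `M`, so it never leaves `[0, M]`
and the clamp is inactive. Uniqueness is Gronwall's inequality on a ball containing both
solutions, where the quadratic right-hand side is Lipschitz.
-/

open Set Metric

theorem le_of_le_right_of_hasDerivAt_neg {f f' : ℝ → ℝ} {a b c : ℝ}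
    (hf : ContinuousOn f (Icc a b)) (hf' : ∀ x ∈ Ioo a b, HasDerivAt f (f' x) x)
    (hb : c ≤ f b) (hneg : ∀ x ∈ Ioo a b, f x < c → f' x < 0) :
    ∀ x ∈ Icc a b, c ≤ f x := by
  by_contra! ⟨s, hs, hfs⟩
  set A := Icc s b ∩ f ⁻¹' Ici c
  have hA : IsClosed A := (hf.mono (Icc_subset_Icc_left hs.1)).preimage_isClosed_of_isClosed
    isClosed_Icc isClosed_Ici
  have hbA : b ∈ A := ⟨right_mem_Icc.2 hs.2, hb⟩
  have hbdd : BddBelow A := ⟨s, fun x hx => hx.1.1⟩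
  obtain ⟨⟨hsu, hub⟩, hfu : c ≤ f (sInf A)⟩ : sInf A ∈ A := hA.csInf_mem ⟨b, hbA⟩ hbdd
  set u := sInf A
  have hlt : s < u := hsu.lt_of_ne fun h => by rw [h] at hfs; exact hfs.not_ge hfu
  have hbelow : ∀ x ∈ Ioo s u, f x < c := fun x hx =>
    not_le.1 fun hcx => hx.2.not_ge (csInf_le hbdd ⟨⟨hx.1.le, hx.2.le.trans hub⟩, hcx⟩)
  have hsub : Ioo s u ⊆ Ioo a b := Ioo_subset_Ioo hs.1 hub
  obtain ⟨ξ, hξ, hslope⟩ := exists_hasDerivAt_eq_slope f f' hlt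
    (hf.mono (Icc_subset_Icc hs.1 hub)) fun x hx => hf' x (hsub hx)
  have : f' ξ < 0 := hneg ξ (hsub hξ) (hbelow ξ hξ)
  rw [hslope, div_lt_iff₀ (sub_pos.2 hlt), zero_mul] at this
  linarith

theorem exists_abs_le_of_continuousOn_Icc {f : ℝ → ℝ} {a b : ℝ}
    (hf : ContinuousOn f (Icc a b)) : ∃ B, ∀ t ∈ Icc a b, |f t| ≤ B := by
  simpa only [Real.norm_eq_abs] using isCompact_Icc.exists_bound_of_continuousOn hf

noncomputable def riccatiField (b σ : ℝ → ℝ) (t x : ℝ) : ℝ :=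
  b t * x + 1 / 2 * σ t ^ 2 * x ^ 2 - 1

namespace riccatiField

variable {b σ : ℝ → ℝ}

@[simp]
theorem apply_zero (t : ℝ) : riccatiField b σ t 0 = -1 := by
  simp [riccatiField]

theorem sub_eq_mul_sub (t x y : ℝ) : riccatiField b σ t x - riccatiField b σ t y =
    (b t + 1 / 2 * σ t ^ 2 * (x + y)) * (x - y) := by
  unfold riccatiField; ring

theorem continuousOn {s : Set ℝ} (hb : ContinuousOn b s) (hσ : ContinuousOn σ s) (x : ℝ) :
    ContinuousOn (riccatiField b σ · x) s := by
  unfold riccatiField; fun_prop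

theorem lipschitzOnWith {B S ρ t : ℝ} (hb : |b t| ≤ B) (hσ : |σ t| ≤ S) :
    LipschitzOnWith (B + S ^ 2 * ρ).toNNReal (riccatiField b σ t) (closedBall 0 ρ) := by
  refine LipschitzOnWith.of_dist_le' fun x hx y hy => ?_
  rw [mem_closedBall_zero_iff, Real.norm_eq_abs] at hx hy
  have hσ2 : σ t ^ 2 ≤ S ^ 2 := by
    simpa only [sq_abs] using pow_le_pow_left₀ (abs_nonneg _) hσ 2
  have hfactor : |b t + 1 / 2 * σ t ^ 2 * (x + y)| ≤ B + S ^ 2 * ρ := calc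
    _ ≤ |b t| + 1 / 2 * σ t ^ 2 * (|x| + |y|) := by
      grw [abs_add_le, abs_mul, abs_of_nonneg (by positivity : 0 ≤ 1 / 2 * σ t ^ 2), abs_add_le]
    _ ≤ B + S ^ 2 * ρ := by nlinarith [abs_nonneg x, sq_nonneg (σ t)]
  rw [Real.dist_eq, Real.dist_eq, sub_eq_mul_sub, abs_mul]
  exact mul_le_mul_of_nonneg_right hfactor (abs_nonneg _)

theorem pos_of_abs_le_of_le {B m t : ℝ} (hb : |b t| ≤ B) (hm : 0 < m) (hσ : m ≤ σ t) :
    0 < riccatiField b σ t (2 * (B + 1) / m ^ 2 + 1) := by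
  set M := 2 * (B + 1) / m ^ 2 + 1
  have hB : 0 ≤ B := (abs_nonneg _).trans hb
  have hM : 1 < M := lt_add_of_pos_left 1 (div_pos (by linarith) (by positivity))
  have hquad : (B + 1) * M ≤ 1 / 2 * σ t ^ 2 * M ^ 2 := calc
    (B + 1) * M = 1 / 2 * m ^ 2 * (2 * (B + 1) / m ^ 2) * M := by field_simp
    _ ≤ 1 / 2 * σ t ^ 2 * M * M := by gcongr; linarith
    _ = 1 / 2 * σ t ^ 2 * M ^ 2 := by ring
  have hlin : -(B * M) ≤ b t * M := by nlinarith [abs_le.1 hb]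
  unfold riccatiField
  nlinarith

end riccatiField

theorem exists_forall_mem_Icc_hasDerivWithinAt_of_lipschitzWith {E : Type*}
    [NormedAddCommGroup E] [NormedSpace ℝ E] [CompleteSpace E] {v : ℝ → E → E}
    {tmin tmax : ℝ} (t₀ : Icc tmin tmax) (x₀ : E) {K : NNReal} {L : ℝ}
    (hlip : ∀ t ∈ Icc tmin tmax, LipschitzWith K (v t))
    (hcont : ∀ x, ContinuousOn (v · x) (Icc tmin tmax))
    (hbound : ∀ t ∈ Icc tmin tmax, ∀ x, ‖v t x‖ ≤ L) :
    ∃ α : ℝ → E, α t₀ = x₀ ∧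
      ∀ t ∈ Icc tmin tmax, HasDerivWithinAt α (v t (α t)) (Icc tmin tmax) t := by
  set τ := max (tmax - t₀) (t₀ - tmin)
  have hτ : 0 ≤ τ := le_max_of_le_left (sub_nonneg.2 t₀.2.2)
  have hpl : IsPicardLindelof v t₀ x₀ (L.toNNReal * τ.toNNReal) 0 L.toNNReal K :=
    { lipschitzOnWith := fun t ht => (hlip t ht).lipschitzOnWith
      continuousOn := fun x _ => hcont x
      norm_le := fun t ht x _ => (hbound t ht x).trans (Real.le_coe_toNNReal L)
      mul_max_le := by simp [Real.coe_toNNReal _ hτ, τ] }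
  exact hpl.exists_eq_forall_mem_Icc_hasDerivWithinAt₀

section

variable {b σ : ℝ → ℝ}

theorem exists_hasDerivWithinAt_riccatiField_projIcc {T M : ℝ} (hT : 0 ≤ T) (hM : 0 ≤ M)
    (hb : ContinuousOn b (Icc 0 T)) (hσ : ContinuousOn σ (Icc 0 T)) :
    ∃ C : ℝ → ℝ, C T = 0 ∧ ∀ t ∈ Icc 0 T,
      HasDerivWithinAt C (riccatiField b σ t (projIcc 0 M hM (C t))) (Icc 0 T) t := by
  obtain ⟨B, hB⟩ := exists_abs_le_of_continuousOn_Icc hb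
  obtain ⟨S, hS⟩ := exists_abs_le_of_continuousOn_Icc hσ
  set K := (B + S ^ 2 * M).toNNReal
  have hproj_lip : LipschitzWith 1 (fun x => (projIcc 0 M hM x : ℝ)) :=
    LipschitzWith.of_dist_le_mul fun x y => by
      simpa [Real.dist_eq] using abs_projIcc_sub_projIcc hM
  have hproj_mem (x : ℝ) : (projIcc 0 M hM x : ℝ) ∈ closedBall 0 M := by
    obtain ⟨p, hp0, hpM⟩ := projIcc 0 M hM x
    rwa [mem_closedBall_zero_iff, Real.norm_eq_abs, abs_of_nonneg hp0]
  have hlip (t) (ht : t ∈ Icc 0 T) : LipschitzOnWith K (riccatiField b σ t) (closedBall 0 M) :=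
    riccatiField.lipschitzOnWith (hB t ht) (hS t ht)
  refine exists_forall_mem_Icc_hasDerivWithinAt_of_lipschitzWith
    (v := fun t x => riccatiField b σ t (projIcc 0 M hM x)) ⟨T, right_mem_Icc.2 hT⟩ 0
    (K := K * 1) (L := K * M + 1)
    (fun t ht => lipschitzOnWith_univ.1 <|
      (hlip t ht).comp hproj_lip.lipschitzOnWith fun x _ => hproj_mem x)
    (fun x => riccatiField.continuousOn hb hσ _) fun t ht x => ?_
  have hdist := (hlip t ht).dist_le_mul _ (hproj_mem x) 0 (mem_closedBall_self hM)
  rw [Real.dist_eq, Real.dist_eq, riccatiField.apply_zero, sub_zero] at hdist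
  have hp : |(projIcc 0 M hM x : ℝ)| ≤ M := by simpa using hproj_mem x
  have := abs_le.1 (hdist.trans (mul_le_mul_of_nonneg_left hp K.2))
  rw [Real.norm_eq_abs, abs_le]
  constructor <;> linarith

theorem mem_Icc_of_hasDerivWithinAt_riccatiField_projIcc {a T M : ℝ} (hM : 0 ≤ M)
    {C : ℝ → ℝ} (hC : ∀ t ∈ Icc a T,
      HasDerivWithinAt C (riccatiField b σ t (projIcc 0 M hM (C t))) (Icc a T) t)
    (hCT : C T = 0) (hpos : ∀ t ∈ Icc a T, 0 < riccatiField b σ t M) :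
    ∀ t ∈ Icc a T, C t ∈ Icc 0 M := by
  have hcont : ContinuousOn C (Icc a T) := fun t ht => (hC t ht).continuousWithinAt
  have hderiv (t) (ht : t ∈ Ioo a T) :
      HasDerivAt C (riccatiField b σ t (projIcc 0 M hM (C t))) t :=
    (hC t (Ioo_subset_Icc_self ht)).hasDerivAt (Icc_mem_nhds ht.1 ht.2)
  have hlower := le_of_le_right_of_hasDerivAt_neg hcont hderiv hCT.ge fun t _ hneg => by
    simp [projIcc_of_le_left hM hneg.le]
  have hupper := le_of_le_right_of_hasDerivAt_neg (c := -M) hcont.neg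
    (fun t ht => (hderiv t ht).neg) (by simp [hCT, hM]) fun t ht hgt => by
      rw [projIcc_of_right_le hM (neg_lt_neg_iff.1 hgt).le]
      exact neg_neg_of_pos (hpos t (Ioo_subset_Icc_self ht))
  exact fun t ht => ⟨hlower t ht, neg_le_neg_iff.1 (hupper t ht)⟩

theorem eqOn_of_hasDerivWithinAt_riccatiField {a T : ℝ} (hb : ContinuousOn b (Icc a T))
    (hσ : ContinuousOn σ (Icc a T)) {C₁ C₂ : ℝ → ℝ}
    (h₁ : ∀ t ∈ Icc a T, HasDerivWithinAt C₁ (riccatiField b σ t (C₁ t)) (Icc a T) t)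
    (h₂ : ∀ t ∈ Icc a T, HasDerivWithinAt C₂ (riccatiField b σ t (C₂ t)) (Icc a T) t)
    (hT : C₁ T = C₂ T) : EqOn C₁ C₂ (Icc a T) := by
  have hc₁ : ContinuousOn C₁ (Icc a T) := fun t ht => (h₁ t ht).continuousWithinAt
  have hc₂ : ContinuousOn C₂ (Icc a T) := fun t ht => (h₂ t ht).continuousWithinAt
  obtain ⟨B, hB⟩ := exists_abs_le_of_continuousOn_Icc hb
  obtain ⟨S, hS⟩ := exists_abs_le_of_continuousOn_Icc hσ
  obtain ⟨ρ₁, hρ₁⟩ := exists_abs_le_of_continuousOn_Icc hc₁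
  obtain ⟨ρ₂, hρ₂⟩ := exists_abs_le_of_continuousOn_Icc hc₂
  set ρ := max ρ₁ ρ₂
  have hball {C : ℝ → ℝ} {ρ' : ℝ} (hC : ∀ t ∈ Icc a T, |C t| ≤ ρ') (hρ' : ρ' ≤ ρ) :
      ∀ t ∈ Ioc a T, C t ∈ closedBall 0 ρ := fun t ht => by
    simpa using (hC t (Ioc_subset_Icc_self ht)).trans hρ'
  have hleft {C : ℝ → ℝ}
      (hC : ∀ t ∈ Icc a T, HasDerivWithinAt C (riccatiField b σ t (C t)) (Icc a T) t) :
      ∀ t ∈ Ioc a T, HasDerivWithinAt C (riccatiField b σ t (C t)) (Iic t) t := fun t ht =>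
    (hC t (Ioc_subset_Icc_self ht)).mono_of_mem_nhdsWithin (Icc_mem_nhdsLE_of_mem ht)
  exact ODE_solution_unique_of_mem_Icc_left (s := fun _ => closedBall 0 ρ)
    (fun t ht => riccatiField.lipschitzOnWith (hB t (Ioc_subset_Icc_self ht))
      (hS t (Ioc_subset_Icc_self ht)))
    hc₁ (hleft h₁) (hball hρ₁ (le_max_left _ _)) hc₂ (hleft h₂) (hball hρ₂ (le_max_right _ _)) hT

theorem exists_hasDerivWithinAt_riccatiField_mem_Icc {T : ℝ} (hT : 0 ≤ T)
    (hb : ContinuousOn b (Icc 0 T)) (hσ : ContinuousOn σ (Icc 0 T))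
    (hσpos : ∀ t ∈ Icc 0 T, 0 < σ t) :
    ∃ C : ℝ → ℝ, ∃ M, C T = 0 ∧ ∀ t ∈ Icc 0 T,
      HasDerivWithinAt C (riccatiField b σ t (C t)) (Icc 0 T) t ∧ C t ∈ Icc 0 M := by
  obtain ⟨B, hB⟩ := exists_abs_le_of_continuousOn_Icc hb
  obtain ⟨t₀, ht₀, hmin⟩ := isCompact_Icc.exists_isMinOn (nonempty_Icc.2 hT) hσ
  have hB0 : 0 ≤ B := (abs_nonneg _).trans (hB t₀ ht₀)
  set M := 2 * (B + 1) / σ t₀ ^ 2 + 1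
  have hM : 0 ≤ M := by positivity
  obtain ⟨C, hCT, hC⟩ := exists_hasDerivWithinAt_riccatiField_projIcc hT hM hb hσ
  have hCM := mem_Icc_of_hasDerivWithinAt_riccatiField_projIcc hM hC hCT fun t ht =>
    riccatiField.pos_of_abs_le_of_le (hB t ht) (hσpos t₀ ht₀) (hmin ht)
  refine ⟨C, M, hCT, fun t ht => ⟨?_, hCM t ht⟩⟩
  simpa only [projIcc_of_mem hM (hCM t ht)] using hC t ht

end

/-- Global solvability of the bond-price Riccati equation: with continuous `b` and `σ > 0`
on `[0,T]`, there is a unique continuously differentiable `C(·,T) : [0,T] → ℝ` with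
`∂C/∂t − b C − (1/2)σ²C² + 1 = 0` and `C(T,T) = 0`; it satisfies `0 ≤ C` and is bounded
on `[0,T]`. -/
theorem riccati_global_solution (T : ℝ) (hT : 0 < T) (b σ : ℝ → ℝ)
    (hb : ContinuousOn b (Set.Icc 0 T)) (hσ : ContinuousOn σ (Set.Icc 0 T))
    (hσpos : ∀ s ∈ Set.Icc 0 T, 0 < σ s) :
    ∃ C : ℝ → ℝ,
      ((∀ s ∈ Set.Icc 0 T,
          HasDerivWithinAt C (b s * C s + (1 / 2) * (σ s) ^ 2 * (C s) ^ 2 - 1)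
            (Set.Icc 0 T) s) ∧
        C T = 0) ∧
      (∀ s ∈ Set.Icc 0 T, 0 ≤ C s) ∧
      (∃ M : ℝ, ∀ s ∈ Set.Icc 0 T, |C s| ≤ M) ∧
      (∀ C' : ℝ → ℝ,
        ((∀ s ∈ Set.Icc 0 T,
            HasDerivWithinAt C' (b s * C' s + (1 / 2) * (σ s) ^ 2 * (C' s) ^ 2 - 1)
              (Set.Icc 0 T) s) ∧
          C' T = 0) →
        Set.EqOn C' C (Set.Icc 0 T)) := by
  obtain ⟨C, M, hCT, hC⟩ := exists_hasDerivWithinAt_riccatiField_mem_Icc hT.le hb hσ hσpos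
  refine ⟨C, ⟨fun s hs => (hC s hs).1, hCT⟩, fun s hs => (hC s hs).2.1,
    ⟨M, fun s hs => (abs_of_nonneg (hC s hs).2.1).trans_le (hC s hs).2.2⟩,
    fun C' ⟨hC', hC'T⟩ => eqOn_of_hasDerivWithinAt_riccatiField hb hσ hC'
      (fun s hs => (hC s hs).1) (hC'T.trans hCT.symm)⟩
end
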